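/- arXiv:1210.2289 — 8 statements merged into one kernel-verified Lean document; each statement's English description precedes it below -/
import Mathlib

section
/- (Convergence rate of the accelerated inexact proximal-gradient method) Let g : ℝ^d → ℝ be convex and differentiable with L-Lipschitz continuous gradient (L > 0), let h : ℝ^d → ℝ be convex and lower semicontinuous, and suppose f = g + h attains its minimum at some x* ∈ ℝ^d. Let α = 1/L. Let {e^(k)}_{k≥1} be a sequence in ℝ^d and {ε^(k)}_{k≥1} a sequence of nonnegative reals. Let x^(0) = y^(0) ∈ ℝ^d, and suppose the sequences {x^(k)}, {y^(k)} satisfy, for every k ≥ 1: (i) h(x^(k)) + (1/(2α))‖x^(k) − v^(k)‖² ≤ inf_{z ∈ ℝ^d} ( h(z) + (1/(2α))‖z − v^(k)‖² ) + ε^(k), where v^(k) = y^(k−1) − α·(∇g(y^(k−1)) + e^(k)); and (ii) y^(k) = x^(k) + ((k−1)/(k+2))·(x^(k) − x^(k−1)). Then for all n ≥ 1, f(x^(n)) − f(x*) ≤ 2L·(‖x^(0) − x*‖ + 2·Ã_n + √(2·B̃_n))² / (n+1)², where Ã_n = Σ_{k=1}^n k·( ‖e^(k)‖/L + √(2ε^(k)/L)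 ) and B̃_n = Σ_{k=1}^n k²·ε^(k)/L. -/
/-!
Nesterov's estimate-sequence argument, carried along with the errors. An ε-minimizer of the
`L`-strongly convex prox objective is as good as an exact one up to the term `√(2Lε)‖z - x‖`;
together with the descent lemma for `g` and first-order convexity this gives, for every `z` and
every step from `y = y⁽ᵏ⁾` to `x = x⁽ᵏ⁺¹⁾`,
`f x ≤ f z + L/2 ‖z - y‖² - L/2 ‖z - x‖² + (‖e‖ + √(2Lε)) ‖z - x‖ + ε`.
Choosing `z = (1 - θ) x⁽ᵏ⁾ + θ x*` with `θ = 2/(k+2)` turns `z - y` and `z - x` into `θ` times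
`x* - u⁽ᵏ⁾` and `x* - u⁽ᵏ⁺¹⁾` for the momentum points `u`, so the energy
`(k+1)² (f x⁽ᵏ⁾ - f x*) / (2L) + ‖x* - u⁽ᵏ⁾‖²` grows at each step by at most a term linear in
`‖x* - u⁽ᵏ⁺¹⁾‖`. Summing, the distances `‖x* - u⁽ᵐ⁾‖` satisfy a quadratic recursive bound;
evaluating it at the index where they are largest bounds all of them, hence the rate.
-/

open Set Real AffineMap
open scoped RealInnerProductSpace

-- Take `t = 1` if `a ≤ b`, `t = √(b / a)` if `0 < b < a`, and let `t → 0` if `b = 0`.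
lemma le_add_two_sqrt_mul_of_forall_le_mul_add_div {D a b : ℝ} (hb : 0 ≤ b)
    (h : ∀ t, 0 < t → t ≤ 1 → D ≤ a * t + b / t) : D ≤ b + 2 * √(a * b) := by
  rcases le_or_gt a b with hab | hba
  · have hsq : a ≤ 2 * √(a * b) := by
      rcases le_or_gt a 0 with ha | ha
      · linarith [sqrt_nonneg (a * b)]
      · have : a ≤ √(a * b) := le_sqrt_of_sq_le (by nlinarith)
        linarith [sqrt_nonneg (a * b)]
    linarith [h 1 one_pos le_rfl]
  rcases hb.eq_or_lt with rfl | hb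
  · simp only [mul_zero, sqrt_zero, add_zero, zero_div] at h ⊢
    by_contra! hD
    have hDt := h (min 1 (D / (2 * a))) (by positivity) (min_le_left _ _)
    nlinarith [min_le_right 1 (D / (2 * a)), mul_div_cancel₀ D (by positivity : 2 * a ≠ 0)]
  · have ha : 0 < a := hb.trans hba
    set t := √(b / a)
    have ht : 0 < t := sqrt_pos.2 (div_pos hb ha)
    have ht1 : t ≤ 1 := sqrt_le_one.2 ((div_le_one ha).2 hba.le)
    have hbt : b = a * t ^ 2 := by rw [sq_sqrt (div_pos hb ha).le]; field_simp
    have hat : a * t = √(a * b) := by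
      rw [hbt, ← mul_assoc, ← sq, ← mul_pow, sqrt_sq (by positivity)]
    have hDt := h t ht ht1
    rw [show b / t = a * t by rw [hbt]; field_simp] at hDt
    linarith

lemma le_add_sqrt_of_sq_le_add_mul {r A S : ℝ} (hA : 0 ≤ A) (h : r ^ 2 ≤ S + A * r) :
    r ≤ A + √S := by
  by_contra! hr
  rcases le_or_gt S 0 with hS | hS
  · rw [sqrt_eq_zero'.2 hS, add_zero] at hr
    nlinarith
  · nlinarith [sq_sqrt hS.le, sqrt_nonneg S]

lemma sqrt_sq_add_le_add_sqrt {a b c : ℝ} (ha : 0 ≤ a) (hbc : b ≤ c) : √(a ^ 2 + b) ≤ a + √c := by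
  rcases le_or_gt c 0 with hc | hc
  · rw [sqrt_eq_zero'.2 hc, add_zero, sqrt_le_left ha]
    linarith
  · rw [sqrt_le_left (by positivity)]
    nlinarith [sq_sqrt hc.le, sqrt_nonneg c]

section NormedSpace

variable {E : Type*} [NormedAddCommGroup E] [NormedSpace ℝ E]

lemma StrongConvexOn.add_sq_le_of_forall_le_add {s : Set E} {m ε : ℝ} {Φ : E → ℝ}
    (hΦ : StrongConvexOn s m Φ) (hε : 0 ≤ ε) {x : E} (hx : x ∈ s)
    (hmin : ∀ w ∈ s, Φ x ≤ Φ w + ε) {z : E} (hz : z ∈ s) :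
    Φ x + m / 2 * ‖z - x‖ ^ 2 ≤ Φ z + ε + √(2 * m * ε) * ‖z - x‖ := by
  -- strong convexity at `(1 - t) x + t z`; the optimal `t` is chosen afterwards
  have key : ∀ t, 0 < t → t ≤ 1 →
      Φ x - Φ z + m / 2 * ‖z - x‖ ^ 2 ≤ m / 2 * ‖z - x‖ ^ 2 * t + ε / t := by
    intro t ht0 ht1
    have hconv := hΦ.2 hx hz (sub_nonneg.2 ht1) ht0.le (by ring)
    have hle := hmin _ (hΦ.1 hx hz (sub_nonneg.2 ht1) ht0.le (by ring))
    simp only [smul_eq_mul, norm_sub_rev x z] at hconv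
    have hmul : (Φ x - Φ z + m / 2 * ‖z - x‖ ^ 2 - m / 2 * ‖z - x‖ ^ 2 * t) * t ≤ ε := by
      nlinarith
    linarith [(le_div_iff₀ ht0).2 hmul]
  have hsqrt : 2 * √(m / 2 * ‖z - x‖ ^ 2 * ε) = √(2 * m * ε) * ‖z - x‖ := by
    rw [show m / 2 * ‖z - x‖ ^ 2 * ε = 2 * m * ε * (‖z - x‖ / 2) ^ 2 by ring,
      sqrt_mul' _ (sq_nonneg _), sqrt_sq (by positivity)]
    ring
  linarith [le_add_two_sqrt_mul_of_forall_le_mul_add_div hε key]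

end NormedSpace

section InnerProductSpace

variable {E : Type*} [NormedAddCommGroup E] [InnerProductSpace ℝ E]

lemma ConvexOn.strongConvexOn_add_sq_norm_sub {s : Set E} {h : E → ℝ} (hh : ConvexOn ℝ s h)
    (m : ℝ) (v : E) : StrongConvexOn s m (fun w ↦ h w + m / 2 * ‖w - v‖ ^ 2) := by
  rw [strongConvexOn_iff_convex]
  have hlin := ((-m) • innerₛₗ ℝ v).convexOn hh.1 |>.add_const (m / 2 * ‖v‖ ^ 2)
  refine (hh.add hlin).congr fun w _ ↦ ?_
  simp only [Pi.add_apply, LinearMap.smul_apply, smul_eq_mul, innerₛₗ_apply_apply, norm_sub_sq_real,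
    real_inner_comm w v]
  ring

-- `IsApproxProx h α ε v x` is the paper's `x ∈ prox_{h,ε}^α{v}`.
def IsApproxProx (h : E → ℝ) (α ε : ℝ) (v x : E) : Prop :=
  ∀ z, h x + 1 / (2 * α) * ‖x - v‖ ^ 2 ≤ h z + 1 / (2 * α) * ‖z - v‖ ^ 2 + ε

variable [CompleteSpace E] {g : E → ℝ}

lemma HasGradientAt.hasDerivAt_comp_lineMap {G a b : E} {t : ℝ}
    (hg : HasGradientAt g G (lineMap a b t)) :
    HasDerivAt (fun s ↦ g (lineMap a b s)) ⟪G, b - a⟫ t := by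
  simpa [InnerProductSpace.toDual_apply_apply, Function.comp_def] using
    hg.hasFDerivAt.comp_hasDerivAt t (hasDerivAt_lineMap (a := a) (b := b))

lemma ConvexOn.add_inner_le_of_hasGradientAt (hg : ConvexOn ℝ univ g) {G w : E}
    (hG : HasGradientAt g G w) (z : E) : g w + ⟪G, z - w⟫ ≤ g z := by
  have hline : ConvexOn ℝ univ (fun s ↦ g (lineMap w z s)) :=
    hg.comp_affineMap (lineMap w z)
  have hslope := hline.le_slope_of_hasDerivAt (mem_univ 0) (mem_univ 1) zero_lt_one
    (HasGradientAt.hasDerivAt_comp_lineMap (by simpa using hG))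
  simp only [slope_def_field, lineMap_apply_one, lineMap_apply_zero, sub_zero, div_one] at hslope
  linarith

lemma le_add_inner_add_sq_of_lipschitz_gradient {g' : E → E} {L : ℝ}
    (hgrad : ∀ z, HasGradientAt g (g' z) z) (hLip : ∀ z w, ‖g' z - g' w‖ ≤ L * ‖z - w‖)
    (w z : E) : g z ≤ g w + ⟪g' w, z - w⟫ + L / 2 * ‖z - w‖ ^ 2 := by
  set F : ℝ → ℝ := fun t ↦ g (lineMap w z t) - t * ⟪g' w, z - w⟫ - L / 2 * t ^ 2 * ‖z - w‖ ^ 2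
  have hF : ∀ t, HasDerivAt F
      (⟪g' (lineMap w z t) - g' w, z - w⟫ - L * t * ‖z - w‖ ^ 2) t := by
    intro t
    refine (((HasGradientAt.hasDerivAt_comp_lineMap (a := w) (b := z) (hgrad _)).sub
      ((hasDerivAt_id t).mul_const ⟪g' w, z - w⟫)).sub
      (((hasDerivAt_pow 2 t).const_mul (L / 2)).mul_const (‖z - w‖ ^ 2))).congr_deriv ?_
    simp only [inner_sub_left]
    ring
  have hanti : AntitoneOn F (Ici 0) := by
    refine antitoneOn_of_hasDerivWithinAt_nonpos (convex_Ici 0)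
      (fun t _ ↦ (hF t).continuousAt.continuousWithinAt) (fun t _ ↦ (hF t).hasDerivWithinAt) ?_
    intro t ht
    rw [interior_Ici, mem_Ioi] at ht
    have hinner : ⟪g' (lineMap w z t) - g' w, z - w⟫ ≤ L * t * ‖z - w‖ ^ 2 :=
      calc ⟪g' (lineMap w z t) - g' w, z - w⟫ ≤ ‖g' (lineMap w z t) - g' w‖ * ‖z - w‖ :=
            real_inner_le_norm _ _
        _ ≤ L * ‖lineMap w z t - w‖ * ‖z - w‖ := by gcongr; exact hLip _ _
        _ = L * t * ‖z - w‖ ^ 2 := by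
            rw [lineMap_apply_module', add_sub_cancel_right, norm_smul, norm_of_nonneg ht.le]
            ring
    linarith
  have hF01 := hanti (mem_Ici.2 le_rfl) (mem_Ici.2 zero_le_one) zero_le_one
  simp only [F, lineMap_apply_zero, lineMap_apply_one] at hF01
  linarith

lemma IsApproxProx.add_le_of_gradient_step {h : E → ℝ} {g' : E → E}
    {L ε : ℝ} {e x y : E} (hgconv : ConvexOn ℝ univ g) (hgrad : ∀ z, HasGradientAt g (g' z) z)
    (hL : 0 < L) (hLip : ∀ z w, ‖g' z - g' w‖ ≤ L * ‖z - w‖) (hh : ConvexOn ℝ univ h)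
    (hε : 0 ≤ ε) (hx : IsApproxProx h (1 / L) ε (y - (1 / L) • (g' y + e)) x) (z : E) :
    g x + h x ≤ g z + h z + L / 2 * ‖z - y‖ ^ 2 - L / 2 * ‖z - x‖ ^ 2
      + (‖e‖ + √(2 * L * ε)) * ‖z - x‖ + ε := by
  set G := g' y + e
  have hcoef : 1 / (2 * (1 / L)) = L / 2 := by field_simp
  simp only [IsApproxProx, hcoef] at hx
  have hstrong := (hh.strongConvexOn_add_sq_norm_sub L (y - (1 / L) • G)).add_sq_le_of_forall_le_add
    hε (mem_univ x) (fun w _ ↦ hx w) (mem_univ z)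
  have hexpand : ∀ w, L / 2 * ‖w - (y - (1 / L) • G)‖ ^ 2
      = L / 2 * ‖w - y‖ ^ 2 + ⟪G, w - y⟫ + 1 / (2 * L) * ‖G‖ ^ 2 := by
    intro w
    rw [show w - (y - (1 / L) • G) = (w - y) + (1 / L) • G by abel, norm_add_sq_real,
      real_inner_smul_right, norm_smul, norm_of_nonneg (by positivity), real_inner_comm]
    field_simp
  simp only [hexpand] at hstrong
  have hdescent := le_add_inner_add_sq_of_lipschitz_gradient hgrad hLip y x
  have hfirst := hgconv.add_inner_le_of_hasGradientAt (hgrad y) z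
  have herr : ⟪e, z - x⟫ ≤ ‖e‖ * ‖z - x‖ := real_inner_le_norm _ _
  have hG : ⟪G, z - y⟫ - ⟪G, x - y⟫ = ⟪g' y, z - y⟫ - ⟪g' y, x - y⟫ + ⟪e, z - x⟫ := by
    rw [← inner_sub_right, ← inner_sub_right, sub_sub_sub_cancel_right, inner_add_left]
  linarith

end InnerProductSpace

section Momentum

variable {E : Type*} [NormedAddCommGroup E] [InnerProductSpace ℝ E]

noncomputable def momentumPoint (x : ℕ → E) (k : ℕ) : E :=
  x k + (((k : ℝ) - 1) / 2) • (x k - x (k - 1))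

lemma momentumPoint_zero (x : ℕ → E) : momentumPoint x 0 = x 0 := by
  simp [momentumPoint]

lemma combo_sub_succ_eq_smul_sub_momentumPoint (x : ℕ → E) (xstar : E) (k : ℕ) :
    (1 - 2 / ((k : ℝ) + 2)) • x k + (2 / ((k : ℝ) + 2)) • xstar - x (k + 1) =
      (2 / ((k : ℝ) + 2)) • (xstar - momentumPoint x (k + 1)) := by
  simp only [momentumPoint, Nat.add_sub_cancel]
  push_cast
  match_scalars <;> field_simp <;> ring

lemma combo_sub_eq_smul_sub_momentumPoint {x y : ℕ → E} (hxy0 : x 0 = y 0)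
    (hacc : ∀ k, 1 ≤ k → y k = x k + (((k : ℝ) - 1) / ((k : ℝ) + 2)) • (x k - x (k - 1)))
    (xstar : E) (k : ℕ) :
    (1 - 2 / ((k : ℝ) + 2)) • x k + (2 / ((k : ℝ) + 2)) • xstar - y k =
      (2 / ((k : ℝ) + 2)) • (xstar - momentumPoint x k) := by
  rcases Nat.eq_zero_or_pos k with rfl | hk
  · rw [momentumPoint_zero, ← hxy0]
    norm_num
  · rw [hacc k hk, momentumPoint]
    match_scalars <;> field_simp
    ring

lemma energy_succ_le {F : E → ℝ} (hF : ConvexOn ℝ univ F) {L C ε : ℝ} (hL : 0 < L)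
    {x : ℕ → E} {yk xstar : E} {k : ℕ}
    (hyk : (1 - 2 / ((k : ℝ) + 2)) • x k + (2 / ((k : ℝ) + 2)) • xstar - yk =
      (2 / ((k : ℝ) + 2)) • (xstar - momentumPoint x k))
    (hstep : ∀ z, F (x (k + 1)) ≤ F z + L / 2 * ‖z - yk‖ ^ 2 - L / 2 * ‖z - x (k + 1)‖ ^ 2
      + C * ‖z - x (k + 1)‖ + ε) :
    ((k : ℝ) + 2) ^ 2 * ((F (x (k + 1)) - F xstar) / (2 * L))
        + ‖xstar - momentumPoint x (k + 1)‖ ^ 2 ≤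
      k * (k + 2) * ((F (x k) - F xstar) / (2 * L)) + ‖xstar - momentumPoint x k‖ ^ 2
        + (((k : ℝ) + 2) * C / L * ‖xstar - momentumPoint x (k + 1)‖
          + ((k : ℝ) + 2) ^ 2 * ε / (2 * L)) := by
  set θ : ℝ := 2 / ((k : ℝ) + 2)
  have hθ : 0 < θ := by positivity
  have hθ1 : θ ≤ 1 := by rw [div_le_one (by positivity)]; linarith [k.cast_nonneg (α := ℝ)]
  have hconv := hF.2 (mem_univ (x k)) (mem_univ xstar) (sub_nonneg.2 hθ1) hθ.le (by ring)
  have hz := hstep ((1 - θ) • x k + θ • xstar)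
  rw [hyk, combo_sub_succ_eq_smul_sub_momentumPoint, norm_smul, norm_smul,
    norm_of_nonneg hθ.le] at hz
  simp only [smul_eq_mul] at hconv
  have key : F (x (k + 1)) - F xstar ≤ (1 - θ) * (F (x k) - F xstar)
      + L / 2 * θ ^ 2 * (‖xstar - momentumPoint x k‖ ^ 2 - ‖xstar - momentumPoint x (k + 1)‖ ^ 2)
      + C * θ * ‖xstar - momentumPoint x (k + 1)‖ + ε := by
    linear_combination hz + hconv
  linear_combination (norm := skip) (((k : ℝ) + 2) ^ 2 / (2 * L)) * key
  apply le_of_eq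
  simp only [θ]
  field_simp
  ring

end Momentum

lemma le_sum_add_sqrt_of_sq_le_add_sum {r c : ℕ → ℝ} {S : ℝ} {n : ℕ}
    (hc : ∀ k, 1 ≤ k → 0 ≤ c k) (h : ∀ m ≤ n, r m ^ 2 ≤ S + ∑ k ∈ Finset.Icc 1 m, c k * r k)
    {m : ℕ} (hm : m ≤ n) : r m ≤ ∑ k ∈ Finset.Icc 1 n, c k + √S := by
  have hA : 0 ≤ ∑ k ∈ Finset.Icc 1 n, c k :=
    Finset.sum_nonneg fun k hk ↦ hc k (Finset.mem_Icc.1 hk).1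
  -- it suffices to bound `r j` for an index `j ≤ n` where `r` is largest
  obtain ⟨j, hj, hmax⟩ := (Finset.range (n + 1)).exists_max_image r ⟨0, by simp⟩
  have hjn : j ≤ n := Nat.lt_succ_iff.1 (Finset.mem_range.1 hj)
  refine (hmax m (Finset.mem_range.2 (Nat.lt_succ_of_le hm))).trans ?_
  rcases le_or_gt (r j) 0 with hrj | hrj
  · linarith [sqrt_nonneg S]
  refine le_add_sqrt_of_sq_le_add_mul hA ((h j hjn).trans ?_)
  gcongr
  calc ∑ k ∈ Finset.Icc 1 j, c k * r k
      ≤ ∑ k ∈ Finset.Icc 1 j, c k * r j := by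
        refine Finset.sum_le_sum fun k hk ↦ ?_
        obtain ⟨hk1, hkj⟩ := Finset.mem_Icc.1 hk
        exact mul_le_mul_of_nonneg_left (hmax k (by simp; omega)) (hc k hk1)
    _ ≤ ∑ k ∈ Finset.Icc 1 n, c k * r j := by
        refine Finset.sum_le_sum_of_subset_of_nonneg (Finset.Icc_subset_Icc_right hjn) ?_
        exact fun k hk _ ↦ mul_nonneg (hc k (Finset.mem_Icc.1 hk).1) hrj.le
    _ = (∑ k ∈ Finset.Icc 1 n, c k) * r j := (Finset.sum_mul ..).symm

lemma sq_mul_add_sq_le_add_sum {δ r w : ℕ → ℝ} (hδ : ∀ k, 0 ≤ δ k)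
    (hstep : ∀ k : ℕ, ((k : ℝ) + 2) ^ 2 * δ (k + 1) + r (k + 1) ^ 2 ≤
      k * (k + 2) * δ k + r k ^ 2 + w (k + 1)) {n : ℕ} (hn : 1 ≤ n) :
    ((n : ℝ) + 1) ^ 2 * δ n + r n ^ 2 ≤ r 0 ^ 2 + ∑ k ∈ Finset.Icc 1 n, w k := by
  induction n, hn using Nat.le_induction with
  | base => simpa [one_add_one_eq_two] using hstep 0
  | succ n hn ih =>
    rw [Finset.sum_Icc_succ_top (by omega)]
    push_cast
    nlinarith [hstep n, hδ n]

lemma sq_mul_le_sq_of_energy_step {δ r c b : ℕ → ℝ} (hδ : ∀ k, 0 ≤ δ k)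
    (hc : ∀ k, 1 ≤ k → 0 ≤ c k) (hb : ∀ k, 1 ≤ k → 0 ≤ b k)
    (hstep : ∀ k : ℕ, ((k : ℝ) + 2) ^ 2 * δ (k + 1) + r (k + 1) ^ 2 ≤
      k * (k + 2) * δ k + r k ^ 2 + (c (k + 1) * r (k + 1) + b (k + 1))) {n : ℕ} (hn : 1 ≤ n) :
    ((n : ℝ) + 1) ^ 2 * δ n ≤
      (∑ k ∈ Finset.Icc 1 n, c k + √(r 0 ^ 2 + ∑ k ∈ Finset.Icc 1 n, b k)) ^ 2 := by
  set A := ∑ k ∈ Finset.Icc 1 n, c k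
  set S := r 0 ^ 2 + ∑ k ∈ Finset.Icc 1 n, b k
  have hA : 0 ≤ A := Finset.sum_nonneg fun k hk ↦ hc k (Finset.mem_Icc.1 hk).1
  have hB : 0 ≤ ∑ k ∈ Finset.Icc 1 n, b k :=
    Finset.sum_nonneg fun k hk ↦ hb k (Finset.mem_Icc.1 hk).1
  have hS : 0 ≤ S := add_nonneg (sq_nonneg _) hB
  have htel : ∀ m : ℕ, 1 ≤ m → ((m : ℝ) + 1) ^ 2 * δ m + r m ^ 2 ≤
      r 0 ^ 2 + ∑ k ∈ Finset.Icc 1 m, (c k * r k + b k) := fun m hm ↦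
    sq_mul_add_sq_le_add_sum hδ hstep hm
  have hbsum : ∀ m ≤ n, ∑ k ∈ Finset.Icc 1 m, b k ≤ ∑ k ∈ Finset.Icc 1 n, b k := fun m hm ↦
    Finset.sum_le_sum_of_subset_of_nonneg (Finset.Icc_subset_Icc_right hm)
      fun k hk _ ↦ hb k (Finset.mem_Icc.1 hk).1
  have hr : ∀ m ≤ n, r m ≤ A + √S := by
    refine fun m ↦ le_sum_add_sqrt_of_sq_le_add_sum hc fun m hm ↦ ?_
    rcases Nat.eq_zero_or_pos m with rfl | hm1
    · simpa [S] using hB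
    · have hle := htel m hm1
      rw [Finset.sum_add_distrib] at hle
      nlinarith [hbsum m hm, hδ m]
  have hcr : ∑ k ∈ Finset.Icc 1 n, c k * r k ≤ A * (A + √S) := by
    rw [Finset.sum_mul]
    exact Finset.sum_le_sum fun k hk ↦ mul_le_mul_of_nonneg_left
      (hr k (Finset.mem_Icc.1 hk).2) (hc k (Finset.mem_Icc.1 hk).1)
  have hle := htel n hn
  rw [Finset.sum_add_distrib] at hle
  nlinarith [sq_sqrt hS, sqrt_nonneg S, mul_nonneg hA (sqrt_nonneg S)]

lemma sum_succ_mul_add_sqrt_div_le {L : ℝ} (hL : 0 < L) {a ε : ℕ → ℝ} (ha : ∀ k, 0 ≤ a k)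
    (n : ℕ) :
    ∑ k ∈ Finset.Icc 1 n, ((k : ℝ) + 1) * (a k + √(2 * L * ε k)) / L ≤
      2 * ∑ k ∈ Finset.Icc 1 n, (k : ℝ) * (a k / L + √(2 * ε k / L)) := by
  rw [Finset.mul_sum]
  refine Finset.sum_le_sum fun k hk ↦ ?_
  have hk : (1 : ℝ) ≤ k := by exact_mod_cast (Finset.mem_Icc.1 hk).1
  have hsqrt : √(2 * ε k / L) = √(2 * L * ε k) / L := by
    rw [show 2 * ε k / L = 2 * L * ε k / L ^ 2 by field_simp, sqrt_div' _ (sq_nonneg L),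
      sqrt_sq hL.le]
  rw [hsqrt, ← add_div, mul_div_assoc]
  have hak : 0 ≤ (a k + √(2 * L * ε k)) / L := by have := ha k; positivity
  nlinarith

lemma sum_succ_sq_mul_div_le {L : ℝ} (hL : 0 < L) {ε : ℕ → ℝ} (hε : ∀ k, 1 ≤ k → 0 ≤ ε k)
    (n : ℕ) :
    ∑ k ∈ Finset.Icc 1 n, ((k : ℝ) + 1) ^ 2 * ε k / (2 * L) ≤
      2 * ∑ k ∈ Finset.Icc 1 n, (k : ℝ) ^ 2 * ε k / L := by
  rw [Finset.mul_sum]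
  refine Finset.sum_le_sum fun k hk ↦ ?_
  have hk1 := (Finset.mem_Icc.1 hk).1
  have hk : (1 : ℝ) ≤ k := by exact_mod_cast hk1
  have hεk : 0 ≤ ε k / (2 * L) := div_nonneg (hε k hk1) (by positivity)
  calc ((k : ℝ) + 1) ^ 2 * ε k / (2 * L) = ((k : ℝ) + 1) ^ 2 * (ε k / (2 * L)) := by ring
    _ ≤ (4 * (k : ℝ) ^ 2) * (ε k / (2 * L)) := by gcongr; nlinarith
    _ = 2 * ((k : ℝ) ^ 2 * ε k / L) := by field_simp; ring

theorem inexact_accelerated_proximal_gradient_general {d : ℕ}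
    (g h : EuclideanSpace ℝ (Fin d) → ℝ)
    (g' : EuclideanSpace ℝ (Fin d) → EuclideanSpace ℝ (Fin d))
    (hgconv : ConvexOn ℝ Set.univ g)
    (hgrad : ∀ z, HasGradientAt g (g' z) z)
    (L : ℝ) (hL : 0 < L)
    (hLip : ∀ z w, ‖g' z - g' w‖ ≤ L * ‖z - w‖)
    (hhconv : ConvexOn ℝ Set.univ h)
    (xstar : EuclideanSpace ℝ (Fin d))
    (hmin : ∀ z, g xstar + h xstar ≤ g z + h z)
    (α : ℝ) (hα : α = 1 / L)
    (e : ℕ → EuclideanSpace ℝ (Fin d)) (ε : ℕ → ℝ) (hε : ∀ k, 1 ≤ k → 0 ≤ ε k)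
    (x y : ℕ → EuclideanSpace ℝ (Fin d)) (hxy0 : x 0 = y 0)
    (hprox : ∀ k, 1 ≤ k → ∀ z,
      h (x k) + (1 / (2 * α)) *
          ‖x k - (y (k - 1) - α • (g' (y (k - 1)) + e k))‖ ^ 2 ≤
        h z + (1 / (2 * α)) *
          ‖z - (y (k - 1) - α • (g' (y (k - 1)) + e k))‖ ^ 2 + ε k)
    (hacc : ∀ k, 1 ≤ k →
      y k = x k + (((k : ℝ) - 1) / ((k : ℝ) + 2)) • (x k - x (k - 1))) :
    ∀ n, 1 ≤ n →
      g (x n) + h (x n) - (g xstar + h xstar) ≤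
        2 * L * (‖x 0 - xstar‖
            + 2 * (∑ k ∈ Finset.Icc 1 n, (k : ℝ) *
                (‖e k‖ / L + Real.sqrt (2 * ε k / L)))
            + Real.sqrt (2 * (∑ k ∈ Finset.Icc 1 n, (k : ℝ) ^ 2 * ε k / L))) ^ 2
          / ((n : ℝ) + 1) ^ 2 := by
  subst hα
  intro n hn
  have hstep (k : ℕ) := energy_succ_le (F := fun w ↦ g w + h w) (hgconv.add hhconv) hL
    (combo_sub_eq_smul_sub_momentumPoint hxy0 hacc xstar k) fun z ↦
      IsApproxProx.add_le_of_gradient_step hgconv hgrad hL hLip hhconv (hε (k + 1) k.succ_pos)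
        (hprox (k + 1) k.succ_pos) z
  have hrate := sq_mul_le_sq_of_energy_step
    (δ := fun k ↦ (g (x k) + h (x k) - (g xstar + h xstar)) / (2 * L))
    (r := fun k ↦ ‖xstar - momentumPoint x k‖)
    (c := fun k ↦ ((k : ℝ) + 1) * (‖e k‖ + √(2 * L * ε k)) / L)
    (b := fun k ↦ ((k : ℝ) + 1) ^ 2 * ε k / (2 * L))
    (fun k ↦ div_nonneg (sub_nonneg.2 (hmin _)) (by positivity))
    (fun k _ ↦ by positivity) (fun k hk ↦ by have := hε k hk; positivity)
    (by simpa only [Nat.cast_add, Nat.cast_one, add_assoc, one_add_one_eq_two] using hstep) hn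
  rw [momentumPoint_zero, norm_sub_rev] at hrate
  have hbase := add_le_add
    (sum_succ_mul_add_sqrt_div_le hL (a := fun k ↦ ‖e k‖) (ε := ε) (fun _ ↦ norm_nonneg _) n)
    (sqrt_sq_add_le_add_sqrt (norm_nonneg (x 0 - xstar)) (sum_succ_sq_mul_div_le hL hε n))
  have := hrate.trans (pow_le_pow_left₀ (by positivity) hbase 2)
  rw [le_div_iff₀ (by positivity)]
  calc _ = 2 * L * (((n : ℝ) + 1) ^ 2 * ((g (x n) + h (x n) - (g xstar + h xstar)) / (2 * L))) := by
        field_simp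
    _ ≤ _ := by linarith [mul_le_mul_of_nonneg_left this (by positivity : (0 : ℝ) ≤ 2 * L)]

/-- Convergence rate of the accelerated inexact proximal-gradient method
(Schmidt–Roux–Bach, Proposition 2). -/
theorem inexact_accelerated_proximal_gradient {d : ℕ}
    (g h : EuclideanSpace ℝ (Fin d) → ℝ)
    (g' : EuclideanSpace ℝ (Fin d) → EuclideanSpace ℝ (Fin d))
    (hgconv : ConvexOn ℝ Set.univ g)
    (hgrad : ∀ z, HasGradientAt g (g' z) z)
    (L : ℝ) (hL : 0 < L)
    (hLip : ∀ z w, ‖g' z - g' w‖ ≤ L * ‖z - w‖)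
    (hhconv : ConvexOn ℝ Set.univ h) (hhlsc : LowerSemicontinuous h)
    (xstar : EuclideanSpace ℝ (Fin d))
    (hmin : ∀ z, g xstar + h xstar ≤ g z + h z)
    (α : ℝ) (hα : α = 1 / L)
    (e : ℕ → EuclideanSpace ℝ (Fin d)) (ε : ℕ → ℝ) (hε : ∀ k, 1 ≤ k → 0 ≤ ε k)
    (x y : ℕ → EuclideanSpace ℝ (Fin d)) (hxy0 : x 0 = y 0)
    (hprox : ∀ k, 1 ≤ k → ∀ z,
      h (x k) + (1 / (2 * α)) *
          ‖x k - (y (k - 1) - α • (g' (y (k - 1)) + e k))‖ ^ 2 ≤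
        h z + (1 / (2 * α)) *
          ‖z - (y (k - 1) - α • (g' (y (k - 1)) + e k))‖ ^ 2 + ε k)
    (hacc : ∀ k, 1 ≤ k →
      y k = x k + (((k : ℝ) - 1) / ((k : ℝ) + 2)) • (x k - x (k - 1))) :
    ∀ n, 1 ≤ n →
      g (x n) + h (x n) - (g xstar + h xstar) ≤
        2 * L * (‖x 0 - xstar‖
            + 2 * (∑ k ∈ Finset.Icc 1 n, (k : ℝ) *
                (‖e k‖ / L + Real.sqrt (2 * ε k / L)))
            + Real.sqrt (2 * (∑ k ∈ Finset.Icc 1 n, (k : ℝ) ^ 2 * ε k / L))) ^ 2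
          / ((n : ℝ) + 1) ^ 2 :=
  inexact_accelerated_proximal_gradient_general g h g' hgconv hgrad L hL hLip hhconv xstar hmin α hα
    e ε hε x y hxy0 hprox hacc
end

section
/- (Geometric convergence of products of consensus weight matrices) Let m ≥ 2, η ∈ (0,1), and B ≥ 1 an integer. For each time t ∈ ℕ, let A(t) be an m×m doubly stochastic matrix with nonnegative entries such that a_ii(t) ≥ η for all i, and for every pair j ≠ i, either a_ij(t) ≥ η or a_ij(t) = 0. Define the directed edge set E_t = { (j,i) : a_ji(t) ≥ η, j ≠ i } and E_∞ = { (j,i) : (j,i) ∈ E_t for infinitely many t }. Suppose (a) the graph with vertex set {1,…,m} and edge set E_∞ is connected, in the sense that every pair of distinct vertices is joined by a path of edges from E_∞; and (b) for every (j,i) ∈ E_∞ and every t, (j,i) ∈ E_t ∪ E_{t+1} ∪ … ∪ E_{t+B−1}. Let B̄ = (m−1)·B, Γ = 2·(1 + η^{−B̄})/(1 − η^{B̄}), and γ = (1 − η^{B̄})^{1/B̄}. Then for all t ≥ s ≥ 0 and all i, j ∈ {1,…,m}, the transition matrix Φ(t,s) = A(t)·A(t−1)···A(s+1)·A(s) satisfies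 | [Φ(t,s)]_{ij} − 1/m | ≤ Γ·γ^{t−s}. -/
/-- The (backward) product of weight matrices `Φ(t,s) = A(t)·A(t-1)···A(s+1)·A(s)`. -/
noncomputable def transitionMatrix {m : ℕ} (A : ℕ → Matrix (Fin m) (Fin m) ℝ)
    (t s : ℕ) : Matrix (Fin m) (Fin m) ℝ :=
  ((List.range (t - s + 1)).map (fun k => A (t - k))).prod

open Finset

namespace NOAux

variable {m : ℕ}

/-- forward product of `k` matrices: `Pk A s k = A(s+k-1) * ... * A(s+1) * A(s)`. -/
noncomputable def Pk (A : ℕ → Matrix (Fin m) (Fin m) ℝ) (s : ℕ) :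
    ℕ → Matrix (Fin m) (Fin m) ℝ
  | 0 => 1
  | k+1 => A (s+k) * Pk A s k

lemma Pk_zero (A : ℕ → Matrix (Fin m) (Fin m) ℝ) (s : ℕ) : Pk A s 0 = 1 := rfl

lemma Pk_succ (A : ℕ → Matrix (Fin m) (Fin m) ℝ) (s k : ℕ) :
    Pk A s (k+1) = A (s+k) * Pk A s k := rfl

lemma Pk_add (A : ℕ → Matrix (Fin m) (Fin m) ℝ) (s k l : ℕ) :
    Pk A s (k + l) = Pk A (s + l) k * Pk A s l := by
  induction k with
  | zero => simp [Pk]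
  | succ k ih =>
      have h1 : (k+1) + l = (k+l) + 1 := by omega
      have h2 : s + (k + l) = (s + l) + k := by omega
      rw [h1, Pk_succ, ih, Pk_succ, h2, Matrix.mul_assoc]

lemma trans_eq (A : ℕ → Matrix (Fin m) (Fin m) ℝ) (s n : ℕ) :
    transitionMatrix A (s+n) s = Pk A s (n+1) := by
  induction n with
  | zero => simp [transitionMatrix, Pk, List.range_succ]
  | succ n ih =>
      have hr : s + (n+1) - s + 1 = (s + n - s + 1) + 1 := by omega
      rw [transitionMatrix, hr, List.range_succ_eq_map]
      simp only [List.map_cons, List.prod_cons, List.map_map]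
      have : ((List.range (s + n - s + 1)).map ((fun k => A (s + (n+1) - k)) ∘ Nat.succ)).prod
          = transitionMatrix A (s+n) s := by
        rw [transitionMatrix]
        congr 1
        apply List.map_congr_left
        intro k hk
        simp only [Function.comp_apply]
        simp only [List.mem_range] at hk
        have h3 : s + (n + 1) - k.succ = s + n - k := by omega
        rw [h3]
      rw [this, ih, Pk_succ]
      rw [show s + (n+1) - 0 = s + (n+1) by omega, ← Pk_succ, ← Pk_succ]

/-- doubly stochastic -/
def DS (M : Matrix (Fin m) (Fin m) ℝ) : Prop :=
  (∀ i j, 0 ≤ M i j) ∧ (∀ i, ∑ j, M i j = 1) ∧ (∀ j, ∑ i, M i j = 1)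

lemma DS_one : DS (1 : Matrix (Fin m) (Fin m) ℝ) := by
  refine ⟨fun i j => ?_, fun i => ?_, fun j => ?_⟩ <;>
    simp [Matrix.one_apply] <;> positivity

lemma DS_mul {M N : Matrix (Fin m) (Fin m) ℝ} (hM : DS M) (hN : DS N) : DS (M * N) := by
  obtain ⟨hM0, hMr, hMc⟩ := hM
  obtain ⟨hN0, hNr, hNc⟩ := hN
  refine ⟨fun i j => ?_, fun i => ?_, fun j => ?_⟩
  · rw [Matrix.mul_apply]
    exact Finset.sum_nonneg fun k _ => mul_nonneg (hM0 i k) (hN0 k j)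
  · simp only [Matrix.mul_apply]
    rw [Finset.sum_comm]
    simp [← Finset.mul_sum, hNr, hMr]
  · simp only [Matrix.mul_apply]
    rw [Finset.sum_comm]
    simp [← Finset.sum_mul, hMc, hNc]

lemma DS_entry_le_one {M : Matrix (Fin m) (Fin m) ℝ} (hM : DS M) (i j : Fin m) :
    M i j ≤ 1 := by
  rw [← hM.2.1 i]
  exact Finset.single_le_sum (fun k _ => hM.1 i k) (Finset.mem_univ j)


lemma pair_bound (hne : (univ : Finset (Fin m)).Nonempty) (W : Matrix (Fin m) (Fin m) ℝ)
    (c : ℝ) (hc : 0 ≤ c) (hWc : ∀ i j, c ≤ W i j) (hWr : ∀ i, ∑ j, W i j = 1)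
    (x : Fin m → ℝ) (i i' : Fin m) :
    W.mulVec x i - W.mulVec x i' ≤
      (1 - c) * (univ.sup' hne x - univ.inf' hne x) := by
  set Mx := univ.sup' hne x with hMxdef
  set mx := univ.inf' hne x with hmxdef
  have hMx : ∀ k, x k ≤ Mx := fun k => Finset.le_sup' x (Finset.mem_univ k)
  have hmx : ∀ k, mx ≤ x k := fun k => Finset.inf'_le x (Finset.mem_univ k)
  obtain ⟨k0, _⟩ := hne
  have hMm : mx ≤ Mx := le_trans (hmx k0) (hMx k0)
  set μ : Fin m → ℝ := fun k => min (W i k) (W i' k) with hμdef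
  have hμc : ∀ k, c ≤ μ k := fun k => le_min (hWc i k) (hWc i' k)
  have hμi : ∀ k, μ k ≤ W i k := fun k => min_le_left _ _
  have hμi' : ∀ k, μ k ≤ W i' k := fun k => min_le_right _ _
  have hμ1 : ∑ k, μ k ≤ 1 := by
    rw [← hWr i]; exact Finset.sum_le_sum fun k _ => hμi k
  have hcμ : c ≤ ∑ k, μ k :=
    le_trans (hμc k0) (Finset.single_le_sum (fun k _ => le_trans hc (hμc k))
      (Finset.mem_univ k0))
  have e1 : W.mulVec x i - W.mulVec x i' =
      (∑ k, (W i k - μ k) * x k) - ∑ k, (W i' k - μ k) * x k := by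
    simp only [Matrix.mulVec, dotProduct, sub_mul, Finset.sum_sub_distrib]
    ring
  have u1 : ∑ k, (W i k - μ k) * x k ≤ (1 - ∑ k, μ k) * Mx := by
    have : ∑ k, (W i k - μ k) * x k ≤ ∑ k, (W i k - μ k) * Mx :=
      Finset.sum_le_sum fun k _ =>
        mul_le_mul_of_nonneg_left (hMx k) (sub_nonneg.2 (hμi k))
    calc ∑ k, (W i k - μ k) * x k ≤ ∑ k, (W i k - μ k) * Mx := this
      _ = (1 - ∑ k, μ k) * Mx := by
          rw [← Finset.sum_mul, Finset.sum_sub_distrib, hWr i]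
  have u2 : (1 - ∑ k, μ k) * mx ≤ ∑ k, (W i' k - μ k) * x k := by
    have : ∑ k, (W i' k - μ k) * mx ≤ ∑ k, (W i' k - μ k) * x k :=
      Finset.sum_le_sum fun k _ =>
        mul_le_mul_of_nonneg_left (hmx k) (sub_nonneg.2 (hμi' k))
    calc (1 - ∑ k, μ k) * mx = ∑ k, (W i' k - μ k) * mx := by
          rw [← Finset.sum_mul, Finset.sum_sub_distrib, hWr i']
      _ ≤ ∑ k, (W i' k - μ k) * x k := this
  rw [e1]
  nlinarith [hμ1, hcμ, hMm]

lemma osc_mulVec (hne : (univ : Finset (Fin m)).Nonempty) (W : Matrix (Fin m) (Fin m) ℝ)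
    (c : ℝ) (hc : 0 ≤ c) (hWc : ∀ i j, c ≤ W i j) (hWr : ∀ i, ∑ j, W i j = 1)
    (x : Fin m → ℝ) :
    univ.sup' hne (W.mulVec x) - univ.inf' hne (W.mulVec x) ≤
      (1 - c) * (univ.sup' hne x - univ.inf' hne x) := by
  set R := (1 - c) * (univ.sup' hne x - univ.inf' hne x) with hR
  have h1 : ∀ i : Fin m, W.mulVec x i - R ≤ univ.inf' hne (W.mulVec x) := by
    intro i
    apply Finset.le_inf' hne
    intro i' _
    have := pair_bound hne W c hc hWc hWr x i i'
    rw [← hR] at this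
    linarith
  have h2 : univ.sup' hne (W.mulVec x) ≤ R + univ.inf' hne (W.mulVec x) := by
    apply Finset.sup'_le hne
    intro i _
    linarith [h1 i]
  linarith

end NOAux


open NOAux Finset

/-- Geometric convergence of products of consensus weight matrices
(Nedić–Ozdaglar, Proposition 1(b)). -/
theorem transition_matrix_geometric_convergence
    (m : ℕ) (hm : 2 ≤ m) (η : ℝ) (hη0 : 0 < η) (hη1 : η < 1)
    (B : ℕ) (hB : 1 ≤ B)
    (A : ℕ → Matrix (Fin m) (Fin m) ℝ)
    (hnonneg : ∀ t i j, 0 ≤ A t i j)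
    (hrow : ∀ t i, ∑ j, A t i j = 1)
    (hcol : ∀ t j, ∑ i, A t i j = 1)
    (hdiag : ∀ t i, η ≤ A t i i)
    (hsig : ∀ t i j, j ≠ i → η ≤ A t i j ∨ A t i j = 0)
    -- `E t` is the set of directed edges `(j,i)` with `a_ji(t) ≥ η`, `j ≠ i`;
    -- `Einf` is the set of edges appearing at infinitely many times.
    (E : ℕ → Set (Fin m × Fin m))
    (hE : ∀ t j i, (j, i) ∈ E t ↔ η ≤ A t j i ∧ j ≠ i)
    (Einf : Set (Fin m × Fin m))
    (hEinf : ∀ j i, (j, i) ∈ Einf ↔ {t : ℕ | (j, i) ∈ E t}.Infinite)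
    -- (a) connectivity: every pair of vertices is joined by a path of edges of `Einf`
    (hconn : ∀ u v : Fin m,
      Relation.ReflTransGen (fun a b : Fin m => (a, b) ∈ Einf) u v)
    -- (b) bounded intercommunication intervals
    (hbdd : ∀ j i, (j, i) ∈ Einf → ∀ t : ℕ,
      ∃ t', t ≤ t' ∧ t' ≤ t + B - 1 ∧ (j, i) ∈ E t') :
    ∀ t s : ℕ, s ≤ t → ∀ i j : Fin m,
      |transitionMatrix A t s i j - 1 / m| ≤
        (2 * (1 + (η ^ ((m - 1) * B))⁻¹) / (1 - η ^ ((m - 1) * B))) *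
          ((1 - η ^ ((m - 1) * B)) ^ ((1 : ℝ) / (((m - 1) * B : ℕ) : ℝ))) ^ (t - s) := by
  intro t s hst i j
  have hm0 : 0 < m := by omega
  have hune : (univ : Finset (Fin m)).Nonempty := ⟨⟨0, hm0⟩, Finset.mem_univ _⟩
  set Nb := (m - 1) * B with hNbdef
  have hNb : 0 < Nb := Nat.mul_pos (by omega) hB
  set q := η ^ Nb with hqdef
  have hq0 : 0 < q := pow_pos hη0 _
  have hq1 : q < 1 := pow_lt_one₀ hη0.le hη1 (by omega)
  have hDSA : ∀ τ, DS (A τ) := fun τ => ⟨hnonneg τ, hrow τ, hcol τ⟩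
  have hDSP : ∀ u k, DS (Pk A u k) := by
    intro u k; induction k with
    | zero => exact DS_one
    | succ k ih => rw [Pk_succ]; exact DS_mul (hDSA _) ih
  -- one-step lower bound on entries
  have hstep : ∀ u k (i0 a b : Fin m), η ≤ A (u + k) a b →
      η ^ k ≤ Pk A u k b i0 → η ^ (k + 1) ≤ Pk A u (k + 1) a i0 := by
    intro u k i0 a b hab hb
    rw [Pk_succ, Matrix.mul_apply]
    calc η ^ (k + 1) = η * η ^ k := by ring
      _ ≤ A (u + k) a b * Pk A u k b i0 :=
          mul_le_mul hab hb (by positivity) (hη0.le.trans hab)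
      _ ≤ ∑ l, A (u + k) a l * Pk A u k l i0 :=
          Finset.single_le_sum (f := fun l => A (u + k) a l * Pk A u k l i0)
            (fun l _ => mul_nonneg (hnonneg _ _ _) ((hDSP u k).1 _ _))
            (Finset.mem_univ b)
  have hmono : ∀ u k d (i0 : Fin m) (S : Finset (Fin m)),
      (∀ j0 ∈ S, η ^ k ≤ Pk A u k j0 i0) →
      ∀ j0 ∈ S, η ^ (k + d) ≤ Pk A u (k + d) j0 i0 := by
    intro u k d
    induction d with
    | zero => intro i0 S h; exact h
    | succ d ih =>
        intro i0 S h j0 hj0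
        exact hstep u (k + d) i0 j0 j0 (hdiag _ _) (ih i0 S h j0 hj0)
  -- crossing edge
  have hcross : ∀ (S : Finset (Fin m)) (u w : Fin m),
      Relation.ReflTransGen (fun a b : Fin m => (a, b) ∈ Einf) u w → u ∉ S → w ∈ S →
      ∃ a b, (a, b) ∈ Einf ∧ a ∉ S ∧ b ∈ S := by
    intro S u w hpath
    induction hpath using Relation.ReflTransGen.head_induction_on with
    | refl => intro hu hw; exact absurd hw hu
    | head hac hcw ih =>
        rename_i a c
        intro ha _
        by_cases hc : c ∈ S
        · exact ⟨a, c, hac, ha, hc⟩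
        · exact ih hc ‹w ∈ S›
  -- growth of the reached set
  have hgrow : ∀ u k (i0 : Fin m) (S : Finset (Fin m)), i0 ∈ S →
      (∀ j0 ∈ S, η ^ k ≤ Pk A u k j0 i0) → S ≠ Finset.univ →
      ∃ S' : Finset (Fin m), S.card + 1 ≤ S'.card ∧ i0 ∈ S' ∧
        ∀ j0 ∈ S', η ^ (k + B) ≤ Pk A u (k + B) j0 i0 := by
    intro u k i0 S hi0 hS hSne
    obtain ⟨v, hv⟩ : ∃ v, v ∉ S := by
      by_contra h
      push_neg at h
      exact hSne (Finset.eq_univ_iff_forall.2 h)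
    obtain ⟨a, b, hab, haS, hbS⟩ := hcross S v i0 (hconn v i0) hv hi0
    obtain ⟨t', ht1, ht2, ht3⟩ := hbdd a b hab (u + k)
    have hedge : η ≤ A t' a b := ((hE t' a b).1 ht3).1
    set d := t' - (u + k) with hd
    have hdB : d + 1 ≤ B := by omega
    have ht' : t' = u + (k + d) := by omega
    rw [ht'] at hedge
    have h1 : ∀ j0 ∈ S, η ^ (k + d) ≤ Pk A u (k + d) j0 i0 := hmono u k d i0 S hS
    have h2 : ∀ j0 ∈ insert a S, η ^ (k + d + 1) ≤ Pk A u (k + d + 1) j0 i0 := by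
      intro j0 hj0
      rcases Finset.mem_insert.1 hj0 with rfl | hj0
      · exact hstep u (k + d) i0 j0 b hedge (h1 b hbS)
      · exact hstep u (k + d) i0 j0 j0 (hdiag _ _) (h1 j0 hj0)
    have h3 := hmono u (k + d + 1) (B - (d + 1)) i0 (insert a S) h2
    have hkB : k + d + 1 + (B - (d + 1)) = k + B := by omega
    rw [hkB] at h3
    exact ⟨insert a S, by rw [Finset.card_insert_of_notMem haS],
      Finset.mem_insert_of_mem hi0, h3⟩
  -- key lemma: every entry of a block of length Nb is at least q
  have hkey : ∀ u (i0 j0 : Fin m), q ≤ Pk A u Nb j0 i0 := by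
    intro u i0 j0
    have main : ∀ r : ℕ, ∃ S : Finset (Fin m), i0 ∈ S ∧
        (∀ j1 ∈ S, η ^ (r * B) ≤ Pk A u (r * B) j1 i0) ∧ min m (r + 1) ≤ S.card := by
      intro r
      induction r with
      | zero =>
          refine ⟨{i0}, Finset.mem_singleton_self i0, ?_, ?_⟩
          · intro j1 hj1
            rw [Finset.mem_singleton] at hj1
            subst hj1
            simp [Pk_zero, Matrix.one_apply]
          · simp only [Finset.card_singleton]
            omega
      | succ r ih =>
          obtain ⟨S, hiS, hS, hcard⟩ := ih
          by_cases hu : S = Finset.univ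
          · refine ⟨S, hiS, ?_, ?_⟩
            · have h := hmono u (r * B) B i0 S hS
              rw [show r * B + B = (r + 1) * B by ring] at h
              exact h
            · rw [hu, Finset.card_univ, Fintype.card_fin]
              omega
          · obtain ⟨S', hcard', hiS', hS'⟩ := hgrow u (r * B) i0 S hiS hS hu
            rw [show r * B + B = (r + 1) * B by ring] at hS'
            refine ⟨S', hiS', hS', ?_⟩
            have hlt : S.card < m := by
              have hle : S.card ≤ m := by
                simpa using Finset.card_le_univ S
              rcases lt_or_eq_of_le hle with h | h
              · exact h
              · exact absurd (Finset.eq_univ_of_card S (by simpa using h)) hu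
            omega
    obtain ⟨S, hiS, hS, hcard⟩ := main (m - 1)
    have hSu : S = Finset.univ := by
      apply Finset.eq_univ_of_card
      have h1 : S.card ≤ m := by simpa using Finset.card_le_univ S
      simp only [Fintype.card_fin]
      omega
    have h := hS j0 (hSu ▸ Finset.mem_univ j0)
    rw [show (m - 1) * B = Nb from rfl] at h
    exact h
  -- column oscillation contraction
  have hcol_mulVec : ∀ l, (fun i1 => Pk A s (Nb + l) i1 j) =
      (Pk A (s + l) Nb).mulVec (fun i1 => Pk A s l i1 j) := by
    intro l
    funext i1
    rw [Pk_add A s Nb l]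
    simp [Matrix.mulVec, dotProduct, Matrix.mul_apply]
  have hbase : ∀ l, univ.sup' hune (fun i1 => Pk A s l i1 j) -
      univ.inf' hune (fun i1 => Pk A s l i1 j) ≤ 1 := by
    intro l
    have h1 : univ.sup' hune (fun i1 => Pk A s l i1 j) ≤ 1 :=
      Finset.sup'_le hune _ fun i1 _ => DS_entry_le_one (hDSP s l) i1 j
    have h2 : (0:ℝ) ≤ univ.inf' hune (fun i1 => Pk A s l i1 j) :=
      Finset.le_inf' hune _ fun i1 _ => (hDSP s l).1 i1 j
    linarith
  have hcontr : ∀ K l, univ.sup' hune (fun i1 => Pk A s (K * Nb + l) i1 j) -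
      univ.inf' hune (fun i1 => Pk A s (K * Nb + l) i1 j) ≤ (1 - q) ^ K := by
    intro K
    induction K with
    | zero => intro l; simpa using hbase l
    | succ K ih =>
        intro l
        rw [show (K + 1) * Nb + l = Nb + (K * Nb + l) by ring, hcol_mulVec (K * Nb + l)]
        calc univ.sup' hune ((Pk A (s + (K * Nb + l)) Nb).mulVec
                (fun i1 => Pk A s (K * Nb + l) i1 j)) -
              univ.inf' hune ((Pk A (s + (K * Nb + l)) Nb).mulVec
                (fun i1 => Pk A s (K * Nb + l) i1 j))
            ≤ (1 - q) * (univ.sup' hune (fun i1 => Pk A s (K * Nb + l) i1 j) -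
                univ.inf' hune (fun i1 => Pk A s (K * Nb + l) i1 j)) :=
              osc_mulVec hune _ q hq0.le (fun i1 j1 => hkey (s + (K * Nb + l)) j1 i1)
                ((hDSP _ _).2.1) _
          _ ≤ (1 - q) * (1 - q) ^ K :=
              mul_le_mul_of_nonneg_left (ih l) (by linarith)
          _ = (1 - q) ^ (K + 1) := by ring
  -- rewrite the transition matrix
  obtain ⟨n0, rfl⟩ : ∃ n0, t = s + n0 := ⟨t - s, by omega⟩
  have hts : s + n0 - s = n0 := by omega
  rw [trans_eq A s n0, hts]
  set n := n0 + 1 with hndef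
  set K := n / Nb with hKdef
  set r0 := n % Nb with hr0def
  have hnK : n = K * Nb + r0 := by
    rw [hKdef, hr0def, Nat.mul_comm]
    exact (Nat.div_add_mod n Nb).symm
  have hr0lt : r0 < Nb := Nat.mod_lt _ hNb
  have hosc : univ.sup' hune (fun i1 => Pk A s n i1 j) -
      univ.inf' hune (fun i1 => Pk A s n i1 j) ≤ (1 - q) ^ K := by
    rw [hnK]; exact hcontr K r0
  -- |entry - 1/m| ≤ oscillation
  have hsum1 : ∑ i1, Pk A s n i1 j = 1 := (hDSP s n).2.2 j
  have hmR : (0:ℝ) < m := Nat.cast_pos.2 hm0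
  have hsup_ge : 1 / (m:ℝ) ≤ univ.sup' hune (fun i1 => Pk A s n i1 j) := by
    rw [div_le_iff₀ hmR]
    have h := Finset.sum_le_sum (f := fun i1 => Pk A s n i1 j)
      (g := fun _ => univ.sup' hune (fun i1 => Pk A s n i1 j))
      (fun i1 (_ : i1 ∈ univ) => Finset.le_sup' (fun i2 => Pk A s n i2 j) (Finset.mem_univ i1))
    rw [hsum1, Finset.sum_const, Finset.card_univ, Fintype.card_fin, nsmul_eq_mul] at h
    linarith
  have hinf_le : univ.inf' hune (fun i1 => Pk A s n i1 j) ≤ 1 / (m:ℝ) := by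
    rw [le_div_iff₀ hmR]
    have h := Finset.sum_le_sum (f := fun _ => univ.inf' hune (fun i1 => Pk A s n i1 j))
      (g := fun i1 => Pk A s n i1 j)
      (fun i1 (_ : i1 ∈ univ) => Finset.inf'_le (fun i2 => Pk A s n i2 j) (Finset.mem_univ i1))
    rw [hsum1, Finset.sum_const, Finset.card_univ, Fintype.card_fin, nsmul_eq_mul] at h
    linarith
  have hs1 : Pk A s n i j ≤ univ.sup' hune (fun i1 => Pk A s n i1 j) :=
    Finset.le_sup' (fun i1 => Pk A s n i1 j) (Finset.mem_univ i)
  have hs2 : univ.inf' hune (fun i1 => Pk A s n i1 j) ≤ Pk A s n i j :=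
    Finset.inf'_le (fun i1 => Pk A s n i1 j) (Finset.mem_univ i)
  have habs : |Pk A s n i j - 1 / (m:ℝ)| ≤ (1 - q) ^ K := by
    rw [abs_le]
    constructor <;> [linarith; linarith]
  refine habs.trans ?_
  -- final arithmetic
  have hX0 : (0:ℝ) < 1 - q := by linarith
  have hX1 : (1:ℝ) - q ≤ 1 := by linarith
  have hNbR : (0:ℝ) < (Nb:ℝ) := Nat.cast_pos.2 hNb
  have hmul : Nb * (K + 1) = K * Nb + Nb := by ring
  have hn0Nb : n0 ≤ Nb * (K + 1) := by omega
  have hexp : (n0:ℝ) / (Nb:ℝ) - 1 ≤ (K:ℝ) := by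
    have h1 : (n0:ℝ) / (Nb:ℝ) ≤ (K:ℝ) + 1 := by
      rw [div_le_iff₀ hNbR]
      have : (n0:ℝ) ≤ (Nb:ℝ) * ((K:ℝ) + 1) := by exact_mod_cast hn0Nb
      linarith
    linarith
  have hq' : (0:ℝ) < q⁻¹ := inv_pos.2 hq0
  have hrpos : (0:ℝ) ≤ (1 - q) ^ ((n0:ℝ) / (Nb:ℝ)) := Real.rpow_nonneg hX0.le _
  calc (1 - q) ^ K = (1 - q) ^ (K:ℝ) := (Real.rpow_natCast _ K).symm
    _ ≤ (1 - q) ^ ((n0:ℝ) / (Nb:ℝ) - 1) :=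
        Real.rpow_le_rpow_of_exponent_ge hX0 hX1 hexp
    _ = (1 - q) ^ ((n0:ℝ) / (Nb:ℝ)) / (1 - q) := by
        rw [Real.rpow_sub hX0, Real.rpow_one]
    _ ≤ (2 * (1 + q⁻¹)) * (1 - q) ^ ((n0:ℝ) / (Nb:ℝ)) / (1 - q) := by
        gcongr
        nlinarith

    _ = 2 * (1 + q⁻¹) / (1 - q) * ((1 - q) ^ ((1:ℝ) / (Nb:ℝ))) ^ n0 := by
        rw [← Real.rpow_natCast ((1 - q) ^ ((1:ℝ) / (Nb:ℝ))) n0, ← Real.rpow_mul hX0.le,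
          show ((1:ℝ) / (Nb:ℝ)) * (n0:ℝ) = (n0:ℝ) / (Nb:ℝ) by ring]
        ring
end

section
/- (The average iterate performs an inexact proximal step) Let h : ℝ^d → ℝ be a convex function such that every subgradient z of h at any point satisfies ‖z‖ ≤ G_h, and let α > 0, m ≥ 1. Let q̂_1,…,q̂_m ∈ ℝ^d, let q̄ = (1/m)·Σ_{i=1}^m q̂_i, and for each i suppose x_i minimizes z ↦ h(z) + (1/(2α))‖z − q̂_i‖² over ℝ^d. Let x̄ = (1/m)·Σ_{i=1}^m x_i. Then h(x̄) + (1/(2α))‖x̄ − q̄‖² ≤ inf_{z ∈ ℝ^d}( h(z) + (1/(2α))‖z − q̄‖² ) + ε, where ε = (2·G_h/m)·Σ_{i=1}^m ‖q̂_i − q̄‖ + (1/(2α))·( (1/m)·Σ_{i=1}^m ‖q̂_i − q̄‖ )². -/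
/-!
Each `x i` minimises `h + ‖· - q̂ i‖² / (2α)`, so `g i = (q̂ i - x i) / α` is a subgradient of `h`
at `x i`, hence `‖g i‖ ≤ G_h`. Jensen and the averaged subgradient inequalities give
`h x̄ ≤ h z - ⟪ḡ, z - x̄⟫ + (1/m) ∑ ⟪g i - ḡ, x i - x̄⟫`. As
`α (g i - ḡ) = (q̂ i - q̄) - (x i - x̄)`, each covariance term is at most
`⟪g i - ḡ, q̂ i - q̄⟫ ≤ 2 G_h ‖q̂ i - q̄‖`; and as `ḡ = (q̄ - x̄) / α` is minus the gradient of the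
quadratic `‖· - q̄‖² / (2α)` at `x̄`, the term `-⟪ḡ, z - x̄⟫` is absorbed by its convexity.
-/

open RealInnerProductSpace Set Filter Topology

theorem nonpos_of_forall_le_mul {a b : ℝ} (h : ∀ t, 0 < t → t ≤ 1 → a ≤ t * b) : a ≤ 0 := by
  have hlim : Tendsto (fun t => t * b) (𝓝[>] 0) (𝓝 0) := by
    simpa using (tendsto_id.mul_const b).mono_left (nhdsWithin_le_nhds (a := (0 : ℝ)))
  refine ge_of_tendsto hlim ?_
  filter_upwards [Ioc_mem_nhdsGT one_pos] with t ht using h t ht.1 ht.2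

section Mean

variable {M : Type*} [AddCommGroup M] [Module ℝ M] {m : ℕ}

noncomputable def mean (v : Fin m → M) : M := (1 / (m : ℝ)) • ∑ i, v i

theorem mean_sub (v w : Fin m → M) : mean (fun i => v i - w i) = mean v - mean w := by
  simp only [mean, Finset.sum_sub_distrib, smul_sub]

theorem mean_smul (a : ℝ) (v : Fin m → M) : mean (fun i => a • v i) = a • mean v := by
  simp only [mean, ← Finset.smul_sum, smul_comm a]

theorem mean_const (hm : m ≠ 0) (a : M) : mean (fun _ : Fin m => a) = a := by
  rw [mean, Finset.sum_const, Finset.card_univ, Fintype.card_fin, ← Nat.cast_smul_eq_nsmul ℝ,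
    smul_smul, one_div, inv_mul_cancel₀ (Nat.cast_ne_zero.mpr hm), one_smul]

theorem mean_mono {a b : Fin m → ℝ} (hab : ∀ i, a i ≤ b i) : mean a ≤ mean b :=
  smul_le_smul_of_nonneg_left (Finset.sum_le_sum fun i _ => hab i) (by positivity)

theorem ConvexOn.map_mean_le {s : Set M} {h : M → ℝ}
    (hconv : ConvexOn ℝ s h) (hm : m ≠ 0) {x : Fin m → M} (hx : ∀ i, x i ∈ s) :
    h (mean x) ≤ mean (fun i => h (x i)) := by
  have := hconv.map_sum_le (t := Finset.univ) (w := fun _ => 1 / (m : ℝ)) (p := x)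
    (fun _ _ => by positivity) (by simp [hm]) (fun i _ => hx i)
  simpa only [mean, Finset.smul_sum] using this

end Mean

section InnerProductSpace

variable {E : Type*} [NormedAddCommGroup E] [InnerProductSpace ℝ E] {m : ℕ}

theorem mean_inner_left (v : Fin m → E) (w : E) : mean (fun i => ⟪v i, w⟫) = ⟪mean v, w⟫ := by
  simp only [mean, real_inner_smul_left, sum_inner, smul_eq_mul]

theorem mean_inner_right (w : E) (v : Fin m → E) : mean (fun i => ⟪w, v i⟫) = ⟪w, mean v⟫ := by
  simp only [mean, real_inner_smul_right, inner_sum, smul_eq_mul]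

theorem norm_mean_le (v : Fin m → E) : ‖mean v‖ ≤ mean (fun i => ‖v i‖) := by
  rw [mean, mean, norm_smul, Real.norm_of_nonneg (by positivity), smul_eq_mul]
  exact mul_le_mul_of_nonneg_left (norm_sum_le _ _) (by positivity)

theorem mean_inner_sub_eq (hm : m ≠ 0) (g x : Fin m → E) (z : E) :
    mean (fun i => ⟪g i, z - x i⟫) =
      ⟪mean g, z - mean x⟫ - mean (fun i => ⟪g i - mean g, x i - mean x⟫) := by
  simp only [inner_sub_left, inner_sub_right, mean_sub, mean_inner_left, mean_inner_right,
    mean_const hm]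
  ring

def HasSubgradientAt (f : E → ℝ) (g x : E) : Prop := ∀ u, f x + ⟪g, u - x⟫ ≤ f u

theorem hasSubgradientAt_mul_norm_sub_sq {c : ℝ} (hc : 0 ≤ c) (q x : E) :
    HasSubgradientAt (fun z => c * ‖z - q‖ ^ 2) ((2 * c) • (x - q)) x := by
  intro u
  have hsplit : u - q = (u - x) + (x - q) := by abel
  simp only [hsplit, norm_add_sq_real, real_inner_smul_left, real_inner_comm (x - q)]
  nlinarith [mul_nonneg hc (sq_nonneg ‖u - x‖)]

theorem ConvexOn.hasSubgradientAt_of_isMinOn {h : E → ℝ} (hconv : ConvexOn ℝ univ h)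
    {c : ℝ} {q p : E} (hp : IsMinOn (fun z => h z + c * ‖z - q‖ ^ 2) univ p) :
    HasSubgradientAt h ((2 * c) • (q - p)) p := by
  intro u
  rw [real_inner_smul_left, ← sub_nonpos]
  refine nonpos_of_forall_le_mul (b := c * ‖u - p‖ ^ 2) fun t ht0 ht1 => ?_
  have hconvex : h (p + t • (u - p)) ≤ (1 - t) * h p + t * h u := by
    have := hconv.2 (mem_univ p) (mem_univ u) (sub_nonneg.mpr ht1) ht0.le (by ring)
    rwa [show (1 - t) • p + t • u = p + t • (u - p) by module] at this
  have hmin := isMinOn_univ_iff.mp hp (p + t • (u - p))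
  have hexpand : ‖p + t • (u - p) - q‖ ^ 2
      = ‖p - q‖ ^ 2 - 2 * t * ⟪q - p, u - p⟫ + t ^ 2 * ‖u - p‖ ^ 2 := by
    rw [show p + t • (u - p) - q = t • (u - p) - (q - p) by abel, norm_sub_sq_real,
      norm_smul, real_inner_smul_left, real_inner_comm, norm_sub_rev q p, Real.norm_eq_abs,
      mul_pow, sq_abs]
    ring
  simp only [hexpand] at hmin
  have hscaled : t * (h p + 2 * c * ⟪q - p, u - p⟫ - h u) ≤ t * (t * (c * ‖u - p‖ ^ 2)) := by
    linear_combination hmin + hconvex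
  exact le_of_mul_le_mul_left hscaled ht0

theorem ConvexOn.map_mean_le_of_hasSubgradientAt {h : E → ℝ} (hconv : ConvexOn ℝ univ h)
    (hm : m ≠ 0) {g x : Fin m → E} (hg : ∀ i, HasSubgradientAt h (g i) (x i)) (z : E) :
    h (mean x) ≤
      h z - ⟪mean g, z - mean x⟫ + mean (fun i => ⟪g i - mean g, x i - mean x⟫) :=
  calc h (mean x) ≤ mean (fun i => h (x i)) := hconv.map_mean_le hm fun _ => mem_univ _
    _ ≤ mean (fun i => h z - ⟪g i, z - x i⟫) := mean_mono fun i => le_sub_iff_add_le.mpr (hg i z)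
    _ = _ := by
      rw [mean_sub (fun _ => h z), mean_const hm, mean_inner_sub_eq hm]
      ring

theorem inner_sub_mean_le_two_mul_norm_sub_mean (hm : m ≠ 0) {β G : ℝ} (hβ : 0 ≤ β)
    {g x q : Fin m → E} (hgq : ∀ i, g i = β • (q i - x i)) (hG : ∀ i, ‖g i‖ ≤ G) (i : Fin m) :
    ⟪g i - mean g, x i - mean x⟫ ≤ 2 * G * ‖q i - mean q‖ := by
  have hmean : mean g = β • (mean q - mean x) := by
    rw [show g = fun i => β • (q i - x i) from funext hgq, mean_smul, mean_sub]
  have hdev : g i - mean g = β • ((q i - mean q) - (x i - mean x)) := by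
    rw [hgq i, hmean]
    module
  have hmono : ⟪g i - mean g, x i - mean x⟫ ≤ ⟪g i - mean g, q i - mean q⟫ := by
    rw [← sub_nonneg, ← inner_sub_right]
    nth_rewrite 1 [hdev]
    rw [real_inner_smul_left, real_inner_self_eq_norm_sq]
    positivity
  have hnorm_mean : ‖mean g‖ ≤ G :=
    (norm_mean_le g).trans ((mean_mono hG).trans_eq (mean_const hm G))
  have hdev_norm : ‖g i - mean g‖ ≤ 2 * G := by
    linarith [norm_sub_le (g i) (mean g), hG i]
  calc ⟪g i - mean g, x i - mean x⟫ ≤ ⟪g i - mean g, q i - mean q⟫ := hmono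
    _ ≤ ‖g i - mean g‖ * ‖q i - mean q‖ := real_inner_le_norm _ _
    _ ≤ 2 * G * ‖q i - mean q‖ := mul_le_mul_of_nonneg_right hdev_norm (norm_nonneg _)

theorem ConvexOn.map_mean_add_mul_norm_sub_sq_le {h : E → ℝ} (hconv : ConvexOn ℝ univ h)
    (hm : m ≠ 0) {c G : ℝ} (hc : 0 ≤ c) {g x q : Fin m → E}
    (hg : ∀ i, HasSubgradientAt h (g i) (x i)) (hgq : ∀ i, g i = (2 * c) • (q i - x i))
    (hG : ∀ i, ‖g i‖ ≤ G) (z : E) :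
    h (mean x) + c * ‖mean x - mean q‖ ^ 2 ≤
      h z + c * ‖z - mean q‖ ^ 2 + 2 * G * mean (fun i => ‖q i - mean q‖) := by
  have hsub := hconv.map_mean_le_of_hasSubgradientAt hm hg z
  have hcov : mean (fun i => ⟪g i - mean g, x i - mean x⟫) ≤
      2 * G * mean (fun i => ‖q i - mean q‖) := by
    rw [← smul_eq_mul, ← mean_smul]
    exact mean_mono fun i => inner_sub_mean_le_two_mul_norm_sub_mean hm (by positivity) hgq hG i
  have hmean : (2 * c) • (mean x - mean q) = -mean g := by
    rw [show g = fun i => (2 * c) • (q i - x i) from funext hgq, mean_smul, mean_sub]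
    module
  have hquad := hasSubgradientAt_mul_norm_sub_sq hc (mean q) (mean x) z
  rw [hmean, inner_neg_left] at hquad
  linarith

end InnerProductSpace

/-- The average iterate performs an inexact proximal step: if each `x_i` is the proximal
point of `h` at `q̂_i`, then the average `x̄` is an `ε`-optimal proximal point at `q̄`. -/
theorem average_inexact_prox {d m : ℕ} (hm : 1 ≤ m)
    (h : EuclideanSpace ℝ (Fin d) → ℝ)
    (hconv : ConvexOn ℝ Set.univ h) (Gh : ℝ)
    (hsub : ∀ x z : EuclideanSpace ℝ (Fin d),
      (∀ u, h x + ⟪z, u - x⟫ ≤ h u) → ‖z‖ ≤ Gh)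
    (α : ℝ) (hα : 0 < α)
    (qhat : Fin m → EuclideanSpace ℝ (Fin d))
    (x : Fin m → EuclideanSpace ℝ (Fin d))
    (hx : ∀ i, ∀ z : EuclideanSpace ℝ (Fin d),
      h (x i) + (1 / (2 * α)) * ‖x i - qhat i‖ ^ 2 ≤
        h z + (1 / (2 * α)) * ‖z - qhat i‖ ^ 2) :
    ∀ z : EuclideanSpace ℝ (Fin d),
      h ((1 / (m : ℝ)) • ∑ i, x i)
          + (1 / (2 * α)) *
            ‖(1 / (m : ℝ)) • ∑ i, x i - (1 / (m : ℝ)) • ∑ i, qhat i‖ ^ 2 ≤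
        h z + (1 / (2 * α)) * ‖z - (1 / (m : ℝ)) • ∑ i, qhat i‖ ^ 2
          + ((2 * Gh / m) * ∑ i, ‖qhat i - (1 / (m : ℝ)) • ∑ j, qhat j‖
            + (1 / (2 * α)) *
              ((1 / (m : ℝ)) * ∑ i, ‖qhat i - (1 / (m : ℝ)) • ∑ j, qhat j‖) ^ 2) := by
  intro z
  have hprox (i : Fin m) :
      HasSubgradientAt h ((2 * (1 / (2 * α))) • (qhat i - x i)) (x i) :=
    hconv.hasSubgradientAt_of_isMinOn (isMinOn_univ_iff.mpr (hx i))
  have hmain := hconv.map_mean_add_mul_norm_sub_sq_le (by omega) (by positivity) hprox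
    (fun _ => rfl) (fun i => hsub _ _ (hprox i)) z
  have hslack : 0 ≤ (1 / (2 * α)) *
      ((1 / (m : ℝ)) * ∑ i, ‖qhat i - (1 / (m : ℝ)) • ∑ j, qhat j‖) ^ 2 := by positivity
  simp only [mean, smul_eq_mul] at hmain
  linear_combination hmain + hslack
end

section
/- (Recursive bound on the sum of gradient-step iterate norms) Consider the distributed proximal-gradient iterates x_i^(k), y_i^(k), q_i^(k), q̂_i^(k) for agents i = 1,…,m as defined in the context. Then for every k ≥ 2: Σ_{i=1}^m ‖q_i^(k+1)‖ ≤ Σ_{i=1}^m ‖q_i^(k)‖ + α·m·(G_g + G_h) + Σ_{i=1}^m ‖x_i^(k) − x_i^(k−1)‖. -/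
open RealInnerProductSpace

open RealInnerProductSpace

lemma tiny_limit {A B : ℝ} (hB : 0 ≤ B) (hA : ∀ t : ℝ, 0 < t → t ≤ 1 → 0 ≤ A + t * B) :
    0 ≤ A := by
  by_contra hc
  push_neg at hc
  rcases eq_or_lt_of_le hB with hB0 | hBpos
  · have := hA 1 one_pos le_rfl
    rw [← hB0] at this; linarith
  · have ht : 0 < -A/(2*B) := div_pos (by linarith) (by linarith)
    have h1 := hA (min 1 (-A/(2*B))) (lt_min one_pos ht) (min_le_left _ _)
    have h2 : min 1 (-A/(2*B)) * B ≤ (-A/(2*B)) * B :=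
      mul_le_mul_of_nonneg_right (min_le_right _ _) hB
    have h3 : (-A/(2*B)) * B = -A/2 := by field_simp
    linarith

lemma prox_subgrad {d : ℕ} {α : ℝ} (hα : 0 < α)
    {h : EuclideanSpace ℝ (Fin d) → ℝ} (hhconv : ConvexOn ℝ Set.univ h)
    {x qh : EuclideanSpace ℝ (Fin d)}
    (hmin : ∀ z, h x + (1 / (2 * α)) * ‖x - qh‖ ^ 2 ≤ h z + (1 / (2 * α)) * ‖z - qh‖ ^ 2)
    (u : EuclideanSpace ℝ (Fin d)) :
    h x + ⟪(1/α) • (qh - x), u - x⟫ ≤ h u := by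
  have hA : ∀ t : ℝ, 0 < t → t ≤ 1 →
      0 ≤ (h u - h x + (1/α) * ⟪x - qh, u - x⟫) + t * (‖u - x‖ ^ 2 / (2*α)) := by
    intro t ht0 ht1
    have hconv := hhconv.2 (Set.mem_univ x) (Set.mem_univ u)
      (by linarith : (0:ℝ) ≤ 1 - t) (le_of_lt ht0) (by ring)
    simp only [smul_eq_mul] at hconv
    have hmin' := hmin ((1-t) • x + t • u)
    have hexp : (1-t) • x + t • u - qh = (x - qh) + t • (u - x) := by module
    have hnorm : ‖(1-t) • x + t • u - qh‖ ^ 2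
        = ‖x - qh‖ ^ 2 + (1 :ℝ) * (2 * (t * ⟪x - qh, u - x⟫) + t ^ 2 * ‖u - x‖ ^ 2) := by
      rw [hexp, norm_add_sq_real, real_inner_smul_right, norm_smul,
        Real.norm_eq_abs, mul_pow, sq_abs]
      ring
    have hsplit : h x + (1 / (2*α)) * ‖x - qh‖ ^ 2 ≤
        h ((1-t) • x + t • u) + ((1 / (2*α)) * ‖x - qh‖ ^ 2 +
          (1 / (2*α)) * (2 * (t * ⟪x - qh, u - x⟫) + t ^ 2 * ‖u - x‖ ^ 2)) := by
      have := hmin'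
      rw [hnorm, mul_add] at this
      simpa [mul_assoc, one_mul] using this
    have step : 0 ≤ t * ((h u - h x + (1/α) * ⟪x - qh, u - x⟫) + t * (‖u - x‖ ^ 2 / (2*α))) := by
      have hkey : t * ((h u - h x + (1/α) * ⟪x - qh, u - x⟫) + t * (‖u - x‖ ^ 2 / (2*α)))
          = (t * h u - t * h x) +
            (1 / (2*α)) * (2 * (t * ⟪x - qh, u - x⟫) + t ^ 2 * ‖u - x‖ ^ 2) := by
        field_simp
        ring
      rw [hkey]
      have hconv' : h ((1-t) • x + t • u) ≤ h x - t * h x + t * h u := by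
        have : (1 - t) * h x = h x - t * h x := by ring
        linarith [hconv, this.le, this.ge]
      linarith [hsplit, hconv']
    exact nonneg_of_mul_nonneg_right (by linarith [step]) ht0
  have hA0 := tiny_limit (by positivity) hA
  have hinner : ⟪(1/α) • (qh - x), u - x⟫ = -((1/α) * ⟪x - qh, u - x⟫) := by
    have hqx : qh - x = -(x - qh) := by abel
    rw [real_inner_smul_left, hqx, inner_neg_left]; ring
  rw [hinner]; linarith


/-- Recursive bound on the sum of gradient-step iterate norms. -/
theorem sum_q_recursive_bound {d m : ℕ} (hm : 1 ≤ m)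
    (α L Gg Gh Γ γ : ℝ)
    (hα : 0 < α) (hL : 0 < L) (hGg : 0 < Gg) (hGh : 0 < Gh) (hΓ : 0 < Γ)
    (hγ0 : 0 < γ) (hγ1 : γ < 1)
    -- the differentiable local objectives and their gradients
    (g : Fin m → EuclideanSpace ℝ (Fin d) → ℝ)
    (g' : Fin m → EuclideanSpace ℝ (Fin d) → EuclideanSpace ℝ (Fin d))
    (hgconv : ∀ i, ConvexOn ℝ Set.univ (g i))
    (hgrad : ∀ i z, HasGradientAt (g i) (g' i z) z)
    (hLip : ∀ i z w, ‖g' i z - g' i w‖ ≤ L * ‖z - w‖)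
    (hGgrad : ∀ i z, ‖g' i z‖ ≤ Gg)
    -- the common nondifferentiable objective, with bounded subgradients
    (h : EuclideanSpace ℝ (Fin d) → ℝ)
    (hhconv : ConvexOn ℝ Set.univ h)
    (hsub : ∀ x z : EuclideanSpace ℝ (Fin d),
      (∀ u, h x + ⟪z, u - x⟫ ≤ h u) → ‖z‖ ≤ Gh)
    -- the consensus weight matrices
    (lam : ℕ → Fin m → Fin m → ℝ)
    (hlam_nonneg : ∀ k, 1 ≤ k → ∀ i j, 0 ≤ lam k i j)
    (hlam_row : ∀ k, 1 ≤ k → ∀ i, ∑ j, lam k i j = 1)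
    (hlam_col : ∀ k, 1 ≤ k → ∀ j, ∑ i, lam k i j = 1)
    (hlam_close : ∀ k, 1 ≤ k → ∀ i j, |lam k i j - 1 / m| ≤ Γ * γ ^ k)
    -- the iterates
    (x y q qhat : ℕ → Fin m → EuclideanSpace ℝ (Fin d))
    (hq : ∀ k, 1 ≤ k → ∀ i, q k i = y (k - 1) i - α • g' i (y (k - 1) i))
    (hqhat : ∀ k, 1 ≤ k → ∀ i, qhat k i = ∑ j, lam k i j • q k j)
    (hx : ∀ k, 1 ≤ k → ∀ i, ∀ z : EuclideanSpace ℝ (Fin d),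
      h (x k i) + (1 / (2 * α)) * ‖x k i - qhat k i‖ ^ 2 ≤
        h z + (1 / (2 * α)) * ‖z - qhat k i‖ ^ 2)
    (hy : ∀ k, 1 ≤ k → ∀ i,
      y k i = x k i + (((k : ℝ) - 1) / ((k : ℝ) + 2)) • (x k i - x (k - 1) i))
    :
    ∀ k, 2 ≤ k →
      ∑ i, ‖q (k + 1) i‖ ≤
        ∑ i, ‖q k i‖ + α * m * (Gg + Gh) + ∑ i, ‖x k i - x (k - 1) i‖ := by
  intro k hk
  have hk1 : 1 ≤ k := by omega
  have hkR : (2:ℝ) ≤ (k:ℝ) := by exact_mod_cast hk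
  -- bound on x via prox subgradient
  have hxb : ∀ i, ‖x k i‖ ≤ ‖qhat k i‖ + α * Gh := by
    intro i
    have hsg := prox_subgrad hα hhconv (hx k hk1 i)
    have hz := hsub (x k i) ((1/α) • (qhat k i - x k i)) hsg
    rw [norm_smul, Real.norm_eq_abs, abs_of_pos (by positivity : (0:ℝ) < 1/α)] at hz
    have hd : ‖qhat k i - x k i‖ ≤ α * Gh := by
      calc ‖qhat k i - x k i‖ = α * ((1/α) * ‖qhat k i - x k i‖) := by field_simp
        _ ≤ α * Gh := mul_le_mul_of_nonneg_left hz hα.le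
    calc ‖x k i‖ = ‖qhat k i + (x k i - qhat k i)‖ := by rw [add_sub_cancel]
      _ ≤ ‖qhat k i‖ + ‖x k i - qhat k i‖ := norm_add_le _ _
      _ = ‖qhat k i‖ + ‖qhat k i - x k i‖ := by rw [norm_sub_rev]
      _ ≤ ‖qhat k i‖ + α * Gh := by linarith
  -- bound on y
  have hyb : ∀ i, ‖y k i‖ ≤ ‖x k i‖ + ‖x k i - x (k-1) i‖ := by
    intro i
    rw [hy k hk1 i]
    have hθ : |((k:ℝ) - 1) / ((k:ℝ) + 2)| ≤ 1 := by
      rw [abs_div, abs_of_nonneg (by linarith), abs_of_nonneg (by linarith)]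
      rw [div_le_one (by linarith)]
      linarith
    calc ‖x k i + (((k:ℝ) - 1) / ((k:ℝ) + 2)) • (x k i - x (k-1) i)‖
        ≤ ‖x k i‖ + ‖(((k:ℝ) - 1) / ((k:ℝ) + 2)) • (x k i - x (k-1) i)‖ := norm_add_le _ _
      _ = ‖x k i‖ + |((k:ℝ) - 1) / ((k:ℝ) + 2)| * ‖x k i - x (k-1) i‖ := by
          rw [norm_smul, Real.norm_eq_abs]
      _ ≤ ‖x k i‖ + 1 * ‖x k i - x (k-1) i‖ := by
          gcongr
      _ = ‖x k i‖ + ‖x k i - x (k-1) i‖ := by ring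
  -- bound on q (k+1)
  have hqb : ∀ i, ‖q (k+1) i‖ ≤ ‖y k i‖ + α * Gg := by
    intro i
    have hqe := hq (k+1) (by omega) i
    simp only [Nat.add_sub_cancel] at hqe
    rw [hqe]
    calc ‖y k i - α • g' i (y k i)‖ ≤ ‖y k i‖ + ‖α • g' i (y k i)‖ := norm_sub_le _ _
      _ = ‖y k i‖ + α * ‖g' i (y k i)‖ := by
          rw [norm_smul, Real.norm_eq_abs, abs_of_pos hα]
      _ ≤ ‖y k i‖ + α * Gg := by
          have := hGgrad i (y k i)
          nlinarith
  -- bound on qhat sum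
  have hqhatb : ∑ i, ‖qhat k i‖ ≤ ∑ i, ‖q k i‖ := by
    have step1 : ∀ i, ‖qhat k i‖ ≤ ∑ j, lam k i j * ‖q k j‖ := by
      intro i
      rw [hqhat k hk1 i]
      calc ‖∑ j, lam k i j • q k j‖ ≤ ∑ j, ‖lam k i j • q k j‖ := norm_sum_le _ _
        _ = ∑ j, lam k i j * ‖q k j‖ := by
            refine Finset.sum_congr rfl fun j _ => ?_
            rw [norm_smul, Real.norm_eq_abs, abs_of_nonneg (hlam_nonneg k hk1 i j)]
    calc ∑ i, ‖qhat k i‖ ≤ ∑ i, ∑ j, lam k i j * ‖q k j‖ :=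
          Finset.sum_le_sum fun i _ => step1 i
      _ = ∑ j, (∑ i, lam k i j) * ‖q k j‖ := by
          rw [Finset.sum_comm]
          exact Finset.sum_congr rfl fun j _ => (Finset.sum_mul _ _ _).symm
      _ = ∑ j, ‖q k j‖ := by
          refine Finset.sum_congr rfl fun j _ => ?_
          rw [hlam_col k hk1 j, one_mul]
  -- combine
  calc ∑ i, ‖q (k+1) i‖
      ≤ ∑ i, (‖qhat k i‖ + α * Gh + ‖x k i - x (k-1) i‖ + α * Gg) := by
        refine Finset.sum_le_sum fun i _ => ?_
        have := hqb i; have := hyb i; have := hxb i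
        linarith
    _ = ∑ i, ‖qhat k i‖ + (m : ℝ) * (α * Gh + α * Gg) + ∑ i, ‖x k i - x (k-1) i‖ := by
        rw [Finset.sum_add_distrib, Finset.sum_add_distrib, Finset.sum_add_distrib,
          Finset.sum_const, Finset.sum_const, Finset.card_univ, Fintype.card_fin,
          nsmul_eq_mul, nsmul_eq_mul]
        ring
    _ ≤ ∑ i, ‖q k i‖ + α * m * (Gg + Gh) + ∑ i, ‖x k i - x (k-1) i‖ := by
        have : (m : ℝ) * (α * Gh + α * Gg) = α * m * (Gg + Gh) := by ring
        linarith [hqhatb]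
end

section
/- (Consensus bound on the accelerated iterates) Consider the distributed proximal-gradient iterates x_i^(k), y_i^(k), q_i^(k), q̂_i^(k) for agents i = 1,…,m as defined in the context, with averages ȳ^(k) = (1/m)Σ_{i=1}^m y_i^(k). Then for every k ≥ 2 and every agent i: ‖y_i^(k) − ȳ^(k)‖ ≤ 4·Γ·γ^k·Σ_{j=1}^m ‖q_j^(k)‖ + 2·Γ·γ^{k−1}·Σ_{j=1}^m ‖q_j^(k−1)‖. -/
open RealInnerProductSpace

/-!
The optimality condition of a proximal step `a = prox(p)` of a convex function `h` says that
`2c (p - a)` is a subgradient of `h` at `a`; monotonicity of subgradients then makes the proximal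
map nonexpansive, so the agents' points `x_i^(k)` are no farther apart than the mixed points
`q̂_i^(k)`. Since every mixing weight is within `Γ γ^k` of `1/m`, any two mixed points differ by at
most `2 Γ γ^k Σ_j ‖q_j^(k)‖`, and hence so does each `x_i^(k)` from the average. The momentum
coefficient `(k-1)/(k+2)` lies in `[0, 1]`, so the extrapolation step at most doubles the
consensus error of `x^(k)` and adds that of `x^(k-1)`.
-/
open Set Filter Topology

section Consensus

variable {ι F : Type*} [NormedAddCommGroup F] [NormedSpace ℝ F]

theorem norm_sum_smul_sub_sum_smul_le (s : Finset ι) {w w' : ι → ℝ} {μ ε : ℝ}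
    (hw : ∀ l ∈ s, |w l - μ| ≤ ε) (hw' : ∀ l ∈ s, |w' l - μ| ≤ ε) (v : ι → F) :
    ‖∑ l ∈ s, w l • v l - ∑ l ∈ s, w' l • v l‖ ≤ 2 * ε * ∑ l ∈ s, ‖v l‖ := by
  rw [← Finset.sum_sub_distrib, Finset.mul_sum]
  refine (norm_sum_le _ _).trans (Finset.sum_le_sum fun l hl => ?_)
  rw [← sub_smul, norm_smul, Real.norm_eq_abs]
  gcongr
  calc |w l - w' l| = |(w l - μ) - (w' l - μ)| := by rw [sub_sub_sub_cancel_right]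
    _ ≤ |w l - μ| + |w' l - μ| := abs_sub _ _
    _ ≤ 2 * ε := by linarith [hw l hl, hw' l hl]

variable [Fintype ι]

noncomputable def consensusError (v : ι → F) (i : ι) : F :=
  v i - (1 / (Fintype.card ι : ℝ)) • ∑ j, v j

theorem norm_consensusError_le (v : ι → F) (i : ι) {D : ℝ} (hD : ∀ j, ‖v i - v j‖ ≤ D) :
    ‖consensusError v i‖ ≤ D := by
  have hn : (0 : ℝ) < Fintype.card ι := by exact_mod_cast Fintype.card_pos_iff.mpr ⟨i⟩
  have hdev : consensusError v i = (1 / (Fintype.card ι : ℝ)) • ∑ j, (v i - v j) := by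
    rw [consensusError, Finset.sum_sub_distrib, Finset.sum_const, Finset.card_univ, smul_sub,
      ← Nat.cast_smul_eq_nsmul ℝ, smul_smul, one_div_mul_cancel hn.ne', one_smul]
  calc ‖consensusError v i‖
      ≤ (1 / (Fintype.card ι : ℝ)) * ∑ j, ‖v i - v j‖ := by
        rw [hdev, norm_smul, Real.norm_of_nonneg (by positivity)]
        gcongr
        exact norm_sum_le _ _
    _ ≤ (1 / (Fintype.card ι : ℝ)) * ∑ _j : ι, D := by gcongr with j; exact hD j
    _ = D := by
        rw [Finset.sum_const, Finset.card_univ, nsmul_eq_mul]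
        field_simp

theorem consensusError_add_smul_sub (x x' : ι → F) (β : ℝ) (i : ι) :
    consensusError (fun j => x j + β • (x j - x' j)) i
      = (1 + β) • consensusError x i - β • consensusError x' i := by
  simp only [consensusError, Finset.sum_add_distrib, ← Finset.smul_sum, Finset.sum_sub_distrib]
  module

theorem norm_consensusError_add_smul_sub_le (x x' : ι → F) {β : ℝ} (hβ0 : 0 ≤ β)
    (hβ1 : β ≤ 1) (i : ι) :
    ‖consensusError (fun j => x j + β • (x j - x' j)) i‖
      ≤ 2 * ‖consensusError x i‖ + ‖consensusError x' i‖ := by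
  rw [consensusError_add_smul_sub]
  calc ‖(1 + β) • consensusError x i - β • consensusError x' i‖
      ≤ (1 + β) * ‖consensusError x i‖ + β * ‖consensusError x' i‖ := by
        refine (norm_sub_le _ _).trans_eq ?_
        rw [norm_smul, norm_smul, Real.norm_of_nonneg (by positivity), Real.norm_of_nonneg hβ0]
    _ ≤ 2 * ‖consensusError x i‖ + 1 * ‖consensusError x' i‖ := by gcongr; linarith
    _ = 2 * ‖consensusError x i‖ + ‖consensusError x' i‖ := by rw [one_mul]

end Consensus

section Prox

variable {E : Type*} [NormedAddCommGroup E] [InnerProductSpace ℝ E]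

theorem ConvexOn.two_mul_inner_le_of_isMinOn_add_sq_norm {h : E → ℝ}
    (hh : ConvexOn ℝ univ h) {c : ℝ} {p a : E}
    (ha : IsMinOn (fun z => h z + c * ‖z - p‖ ^ 2) univ a) (b : E) :
    2 * c * ⟪p - a, b - a⟫ ≤ h b - h a := by
  have hstep : ∀ t ∈ Ioo (0 : ℝ) 1,
      2 * c * ⟪p - a, b - a⟫ ≤ h b - h a + t * (c * ‖b - a‖ ^ 2) := by
    rintro t ⟨ht0, ht1⟩
    have hmin := isMinOn_univ_iff.mp ha ((1 - t) • a + t • b)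
    have hconv := hh.2 (mem_univ a) (mem_univ b) (by linarith : 0 ≤ 1 - t) ht0.le (by ring)
    have hsq : ‖((1 - t) • a + t • b) - p‖ ^ 2
        = ‖a - p‖ ^ 2 - 2 * t * ⟪p - a, b - a⟫ + t ^ 2 * ‖b - a‖ ^ 2 := by
      rw [show ((1 - t) • a + t • b) - p = (a - p) + t • (b - a) by module,
        norm_add_sq_real, norm_smul, mul_pow, Real.norm_of_nonneg ht0.le, real_inner_smul_right,
        ← neg_sub p a, inner_neg_left]
      ring
    simp only [smul_eq_mul, hsq] at hmin hconv
    have : t * (2 * c * ⟪p - a, b - a⟫) ≤ t * (h b - h a + t * (c * ‖b - a‖ ^ 2)) := by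
      nlinarith
    exact le_of_mul_le_mul_left this ht0
  have hlim : Tendsto (fun t : ℝ => h b - h a + t * (c * ‖b - a‖ ^ 2)) (𝓝[>] 0)
      (𝓝 (h b - h a)) := by
    have : Continuous fun t : ℝ => h b - h a + t * (c * ‖b - a‖ ^ 2) := by fun_prop
    simpa using this.continuousWithinAt (s := Ioi 0) (x := 0) |>.tendsto
  exact ge_of_tendsto hlim (eventually_of_mem (Ioo_mem_nhdsGT one_pos) hstep)

theorem ConvexOn.norm_sub_le_of_isMinOn_add_sq_norm {h : E → ℝ}
    (hh : ConvexOn ℝ univ h) {c : ℝ} (hc : 0 < c) {p p' a b : E}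
    (ha : IsMinOn (fun z => h z + c * ‖z - p‖ ^ 2) univ a)
    (hb : IsMinOn (fun z => h z + c * ‖z - p'‖ ^ 2) univ b) :
    ‖a - b‖ ≤ ‖p - p'‖ := by
  have hab := hh.two_mul_inner_le_of_isMinOn_add_sq_norm ha b
  have hba := hh.two_mul_inner_le_of_isMinOn_add_sq_norm hb a
  have hfirm : ‖a - b‖ ^ 2 ≤ ⟪p - p', a - b⟫ := by
    have hsum : ⟪p - a, b - a⟫ + ⟪p' - b, a - b⟫ = ‖a - b‖ ^ 2 - ⟪p - p', a - b⟫ := by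
      rw [← real_inner_self_eq_norm_sq]
      simp only [inner_sub_left, inner_sub_right, real_inner_comm a b, real_inner_comm a p,
        real_inner_comm b p, real_inner_comm a p', real_inner_comm b p']
      ring
    have hsum_nonpos : c * (‖a - b‖ ^ 2 - ⟪p - p', a - b⟫) ≤ 0 := by
      rw [← hsum, mul_add]; linarith
    nlinarith
  have hcs := real_inner_le_norm (p - p') (a - b)
  nlinarith [norm_nonneg (a - b), norm_nonneg (p - p')]

theorem norm_consensusError_prox_le {ι : Type*} [Fintype ι] {h : E → ℝ} (hh : ConvexOn ℝ univ h) {c : ℝ} (hc : 0 < c)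
    {w : ι → ι → ℝ} {μ ε : ℝ} (hw : ∀ i j, |w i j - μ| ≤ ε) {q p x : ι → E}
    (hp : ∀ i, p i = ∑ j, w i j • q j)
    (hx : ∀ i, IsMinOn (fun z => h z + c * ‖z - p i‖ ^ 2) univ (x i)) (i : ι) :
    ‖consensusError x i‖ ≤ 2 * ε * ∑ j, ‖q j‖ :=
  norm_consensusError_le x i fun j =>
    calc ‖x i - x j‖ ≤ ‖p i - p j‖ := hh.norm_sub_le_of_isMinOn_add_sq_norm hc (hx i) (hx j)
      _ ≤ 2 * ε * ∑ l, ‖q l‖ := by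
        rw [hp, hp]
        exact norm_sum_smul_sub_sum_smul_le _ (fun l _ => hw i l) (fun l _ => hw j l) q

end Prox

theorem y_consensus_bound_general {d m : ℕ}
    (α Γ γ : ℝ)
    (hα : 0 < α)
    -- the common nondifferentiable objective, with bounded subgradients
    (h : EuclideanSpace ℝ (Fin d) → ℝ)
    (hhconv : ConvexOn ℝ Set.univ h)
    -- the consensus weight matrices
    (lam : ℕ → Fin m → Fin m → ℝ)
    (hlam_close : ∀ k, 1 ≤ k → ∀ i j, |lam k i j - 1 / m| ≤ Γ * γ ^ k)
    -- the iterates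
    (x y q qhat : ℕ → Fin m → EuclideanSpace ℝ (Fin d))
    (hqhat : ∀ k, 1 ≤ k → ∀ i, qhat k i = ∑ j, lam k i j • q k j)
    (hx : ∀ k, 1 ≤ k → ∀ i, ∀ z : EuclideanSpace ℝ (Fin d),
      h (x k i) + (1 / (2 * α)) * ‖x k i - qhat k i‖ ^ 2 ≤
        h z + (1 / (2 * α)) * ‖z - qhat k i‖ ^ 2)
    (hy : ∀ k, 1 ≤ k → ∀ i,
      y k i = x k i + (((k : ℝ) - 1) / ((k : ℝ) + 2)) • (x k i - x (k - 1) i))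
    :
    ∀ k, 2 ≤ k → ∀ i,
      ‖y k i - (1 / (m : ℝ)) • ∑ j, y k j‖ ≤
        4 * Γ * γ ^ k * ∑ j, ‖q k j‖
          + 2 * Γ * γ ^ (k - 1) * ∑ j, ‖q (k - 1) j‖ := by
  intro k hk i
  have hx_cons : ∀ n, 1 ≤ n → ‖consensusError (x n) i‖ ≤ 2 * (Γ * γ ^ n) * ∑ j, ‖q n j‖ :=
    fun n hn => norm_consensusError_prox_le hhconv (by positivity : 0 < 1 / (2 * α))
      (hlam_close n hn) (hqhat n hn) (fun j => isMinOn_univ_iff.mpr (hx n hn j)) i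
  have hk2 : (2 : ℝ) ≤ k := by exact_mod_cast hk
  have hβ0 : 0 ≤ ((k : ℝ) - 1) / ((k : ℝ) + 2) := div_nonneg (by linarith) (by linarith)
  have hβ1 : ((k : ℝ) - 1) / ((k : ℝ) + 2) ≤ 1 := by rw [div_le_one (by linarith)]; linarith
  have hy_cons := norm_consensusError_add_smul_sub_le (x k) (x (k - 1)) hβ0 hβ1 i
  rw [← funext (hy k (by omega))] at hy_cons
  have hxk := hx_cons k (by omega)
  have hxk' := hx_cons (k - 1) (by omega)
  have hbound : ‖consensusError (y k) i‖ ≤ 4 * Γ * γ ^ k * ∑ j, ‖q k j‖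
      + 2 * Γ * γ ^ (k - 1) * ∑ j, ‖q (k - 1) j‖ := by linarith
  simpa only [consensusError, Fintype.card_fin] using hbound

/-- Consensus bound on the accelerated iterates. -/
theorem y_consensus_bound {d m : ℕ} (hm : 1 ≤ m)
    (α L Gg Gh Γ γ : ℝ)
    (hα : 0 < α) (hL : 0 < L) (hGg : 0 < Gg) (hGh : 0 < Gh) (hΓ : 0 < Γ)
    (hγ0 : 0 < γ) (hγ1 : γ < 1)
    -- the differentiable local objectives and their gradients
    (g : Fin m → EuclideanSpace ℝ (Fin d) → ℝ)
    (g' : Fin m → EuclideanSpace ℝ (Fin d) → EuclideanSpace ℝ (Fin d))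
    (hgconv : ∀ i, ConvexOn ℝ Set.univ (g i))
    (hgrad : ∀ i z, HasGradientAt (g i) (g' i z) z)
    (hLip : ∀ i z w, ‖g' i z - g' i w‖ ≤ L * ‖z - w‖)
    (hGgrad : ∀ i z, ‖g' i z‖ ≤ Gg)
    -- the common nondifferentiable objective, with bounded subgradients
    (h : EuclideanSpace ℝ (Fin d) → ℝ)
    (hhconv : ConvexOn ℝ Set.univ h)
    (hsub : ∀ x z : EuclideanSpace ℝ (Fin d),
      (∀ u, h x + ⟪z, u - x⟫ ≤ h u) → ‖z‖ ≤ Gh)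
    -- the consensus weight matrices
    (lam : ℕ → Fin m → Fin m → ℝ)
    (hlam_nonneg : ∀ k, 1 ≤ k → ∀ i j, 0 ≤ lam k i j)
    (hlam_row : ∀ k, 1 ≤ k → ∀ i, ∑ j, lam k i j = 1)
    (hlam_col : ∀ k, 1 ≤ k → ∀ j, ∑ i, lam k i j = 1)
    (hlam_close : ∀ k, 1 ≤ k → ∀ i j, |lam k i j - 1 / m| ≤ Γ * γ ^ k)
    -- the iterates
    (x y q qhat : ℕ → Fin m → EuclideanSpace ℝ (Fin d))
    (hq : ∀ k, 1 ≤ k → ∀ i, q k i = y (k - 1) i - α • g' i (y (k - 1) i))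
    (hqhat : ∀ k, 1 ≤ k → ∀ i, qhat k i = ∑ j, lam k i j • q k j)
    (hx : ∀ k, 1 ≤ k → ∀ i, ∀ z : EuclideanSpace ℝ (Fin d),
      h (x k i) + (1 / (2 * α)) * ‖x k i - qhat k i‖ ^ 2 ≤
        h z + (1 / (2 * α)) * ‖z - qhat k i‖ ^ 2)
    (hy : ∀ k, 1 ≤ k → ∀ i,
      y k i = x k i + (((k : ℝ) - 1) / ((k : ℝ) + 2)) • (x k i - x (k - 1) i))
    :
    ∀ k, 2 ≤ k → ∀ i,
      ‖y k i - (1 / (m : ℝ)) • ∑ j, y k j‖ ≤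
        4 * Γ * γ ^ k * ∑ j, ‖q k j‖
          + 2 * Γ * γ ^ (k - 1) * ∑ j, ‖q (k - 1) j‖ :=
  y_consensus_bound_general α Γ γ hα h hhconv lam hlam_close x y q qhat hqhat hx hy
end

section
/- (Polynomial bound on the sum of gradient-step iterate norms) Consider the distributed proximal-gradient iterates x_i^(k), y_i^(k), q_i^(k), q̂_i^(k) for agents i = 1,…,m as defined in the context. Then there exist scalars C_q, C_q', C_q'' such that for every k ≥ 2: Σ_{i=1}^m ‖q_i^(k)‖ ≤ C_q + C_q'·k + C_q''·k². -/
/-!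
The proximal step moves a point by at most `α * Gh`, since `α⁻¹ • (p - x)` is a subgradient of `h`
at the proximal point `x` of `p`, and the gradient step moves it by at most `α * Gg`. Writing
`Y k = ∑ i, ‖y k i‖` and `D k = ∑ i, ‖x (k + 1) i - x k i‖`, momentum coefficients of modulus at
most one and doubly stochastic mixing give
  `Y (k + 1) ≤ Y k + c + D k` and `D (k + 1) ≤ D k + ε (k + 1) * Y k + c`,
where `ε k = 2 m Γ γ ^ k` accounts for the disagreement between agents left by the mixing. As
`∑ ε k * k ^ 2` converges, `D` grows at most linearly and `Y` at most quadratically, and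
`∑ i, ‖q (k + 1) i‖ ≤ Y k + m α Gg`.
-/

open RealInnerProductSpace
open Filter Topology Finset

section WeightedSums

variable {ι E : Type*} [Fintype ι] [NormedAddCommGroup E]

theorem sum_norm_le_sum_norm_add_card_mul {u v : ι → E} {r : ℝ} (h : ∀ i, ‖u i - v i‖ ≤ r) :
    ∑ i, ‖u i‖ ≤ ∑ i, ‖v i‖ + Fintype.card ι * r := by
  calc ∑ i, ‖u i‖ ≤ ∑ i, (‖v i‖ + r) :=
        sum_le_sum fun i _ => (norm_le_norm_add_norm_sub' _ _).trans (by linarith [h i])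
    _ = ∑ i, ‖v i‖ + Fintype.card ι * r := by simp [sum_add_distrib]

variable [NormedSpace ℝ E]

theorem norm_sum_smul_le_of_norm_le {w : ι → ℝ} {v : ι → E} {B : ℝ} (hw : ∀ j, 0 ≤ w j)
    (hw1 : ∑ j, w j = 1) (hv : ∀ j, ‖v j‖ ≤ B) : ‖∑ j, w j • v j‖ ≤ B := by
  simpa using (convex_closedBall (0 : E) B).sum_mem (fun j _ => hw j) hw1
    fun j _ => mem_closedBall_zero_iff.2 (hv j)

theorem sum_norm_sum_smul_le {W : ι → ι → ℝ} (hW : ∀ i j, 0 ≤ W i j)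
    (hcol : ∀ j, ∑ i, W i j = 1) (v : ι → E) : ∑ i, ‖∑ j, W i j • v j‖ ≤ ∑ j, ‖v j‖ :=
  calc ∑ i, ‖∑ j, W i j • v j‖ ≤ ∑ i, ∑ j, W i j * ‖v j‖ :=
        sum_le_sum fun i _ => (norm_sum_le _ _).trans_eq <| sum_congr rfl fun j _ => by
          rw [norm_smul, Real.norm_of_nonneg (hW i j)]
    _ = ∑ j, ‖v j‖ := by rw [sum_comm]; simp [← sum_mul, hcol]

theorem norm_sum_smul_sub_sum_smul_le_s13 {w w' : ι → ℝ} {δ : ℝ} (h : ∀ j, |w j - w' j| ≤ δ)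
    (v : ι → E) : ‖∑ j, w j • v j - ∑ j, w' j • v j‖ ≤ δ * ∑ j, ‖v j‖ := by
  rw [← sum_sub_distrib, mul_sum]
  refine (norm_sum_le _ _).trans (sum_le_sum fun j _ => ?_)
  rw [← sub_smul, norm_smul, Real.norm_eq_abs]
  exact mul_le_mul_of_nonneg_right (h j) (norm_nonneg _)

theorem sum_norm_add_smul_sub_le {x x₀ y : ι → E} {θ : ℝ} (hθ : |θ| ≤ 1)
    (hy : ∀ i, y i = x i + θ • (x i - x₀ i)) :
    ∑ i, ‖y i‖ ≤ ∑ i, ‖x i‖ + ∑ i, ‖x i - x₀ i‖ := by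
  rw [← sum_add_distrib]
  refine sum_le_sum fun i _ => ?_
  rw [hy i]
  refine (norm_add_le _ _).trans ?_
  gcongr
  rw [norm_smul, Real.norm_eq_abs]
  exact mul_le_of_le_one_left (norm_nonneg _) hθ

theorem sum_norm_le_of_prox_momentum_step {W : ι → ι → ℝ} (hW : ∀ i j, 0 ≤ W i j)
    (hcol : ∀ j, ∑ i, W i j = 1) {x x₀ y y₀ q : ι → E} {θ r g : ℝ} (hθ : |θ| ≤ 1)
    (hx : ∀ i, ‖x i - ∑ j, W i j • q j‖ ≤ r) (hq : ∀ j, ‖q j - y₀ j‖ ≤ g)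
    (hy : ∀ i, y i = x i + θ • (x i - x₀ i)) :
    ∑ i, ‖y i‖ ≤ ∑ i, ‖y₀ i‖ + Fintype.card ι * (r + g) + ∑ i, ‖x i - x₀ i‖ := by
  linarith [sum_norm_add_smul_sub_le hθ hy, sum_norm_le_sum_norm_add_card_mul hx,
    sum_norm_sum_smul_le hW hcol q, sum_norm_le_sum_norm_add_card_mul hq]

theorem norm_sub_le_of_weights_near {W : ι → ι → ℝ} {w : ι → ℝ} {δ r : ℝ}
    (hW : ∀ i j, |W i j - w j| ≤ δ) {x q : ι → E} (hx : ∀ i, ‖x i - ∑ j, W i j • q j‖ ≤ r)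
    (i i' : ι) : ‖x i' - x i‖ ≤ 2 * r + 2 * δ * ∑ j, ‖q j‖ := by
  have hpq : ‖∑ j, W i' j • q j - ∑ j, W i j • q j‖ ≤ 2 * δ * ∑ j, ‖q j‖ :=
    norm_sum_smul_sub_sum_smul_le_s13 (fun j => by
      linarith [abs_sub_le (W i' j) (w j) (W i j), abs_sub_comm (w j) (W i j), hW i' j, hW i j]) q
  calc ‖x i' - x i‖ = ‖(x i' - ∑ j, W i' j • q j) + (∑ j, W i' j • q j - ∑ j, W i j • q j)
        + (∑ j, W i j • q j - x i)‖ := by congr 1; abel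
    _ ≤ ‖x i' - ∑ j, W i' j • q j‖ + ‖∑ j, W i' j • q j - ∑ j, W i j • q j‖
        + ‖∑ j, W i j • q j - x i‖ := norm_add₃_le
    _ ≤ 2 * r + 2 * δ * ∑ j, ‖q j‖ := by
        rw [norm_sub_rev _ (x i)]; linarith [hx i, hx i']

theorem sum_norm_sub_le_of_mixing_step {W : ι → ι → ℝ} (hW : ∀ i j, 0 ≤ W i j)
    (hrow : ∀ i, ∑ j, W i j = 1) (hcol : ∀ j, ∑ i, W i j = 1)
    {x x₀ x₁ y q : ι → E} {θ r g s : ℝ} (hθ : |θ| ≤ 1)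
    (hx : ∀ i, ‖x i - ∑ j, W i j • q j‖ ≤ r) (hq : ∀ j, ‖q j - y j‖ ≤ g)
    (hy : ∀ j, y j = x₀ j + θ • (x₀ j - x₁ j)) (hs : ∀ i j, ‖x₀ j - x₀ i‖ ≤ s) :
    ∑ i, ‖x i - x₀ i‖ ≤ ∑ j, ‖x₀ j - x₁ j‖ + Fintype.card ι * (r + g + s) := by
  have hstep : ∀ i, ‖x i - x₀ i‖ ≤ ‖∑ j, W i j • (x₀ j - x₁ j)‖ + (r + g + s) := by
    intro i
    have hdecomp : x i - x₀ i = (x i - ∑ j, W i j • q j) + ∑ j, W i j • (q j - y j)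
        + θ • ∑ j, W i j • (x₀ j - x₁ j) + ∑ j, W i j • (x₀ j - x₀ i) := by
      have hmom : θ • ∑ j, W i j • (x₀ j - x₁ j) = ∑ j, W i j • (y j - x₀ j) := by
        simp only [hy, add_sub_cancel_left, smul_sum, smul_comm θ]
      have hconst : ∑ j, W i j • x₀ i = x₀ i := by rw [← sum_smul, hrow i, one_smul]
      rw [hmom]
      simp only [smul_sub, sum_sub_distrib, hconst]
      abel
    have hθsum : ‖θ • ∑ j, W i j • (x₀ j - x₁ j)‖ ≤ ‖∑ j, W i j • (x₀ j - x₁ j)‖ := by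
      rw [norm_smul, Real.norm_eq_abs]
      exact mul_le_of_le_one_left (norm_nonneg _) hθ
    rw [hdecomp]
    refine norm_add₄_le.trans ?_
    linarith [hx i, norm_sum_smul_le_of_norm_le (hW i) (hrow i) hq,
      norm_sum_smul_le_of_norm_le (hW i) (hrow i) (hs i)]
  calc ∑ i, ‖x i - x₀ i‖ ≤ ∑ i, (‖∑ j, W i j • (x₀ j - x₁ j)‖ + (r + g + s)) :=
        sum_le_sum fun i _ => hstep i
    _ ≤ ∑ j, ‖x₀ j - x₁ j‖ + Fintype.card ι * (r + g + s) := by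
        rw [sum_add_distrib, sum_const, card_univ, nsmul_eq_mul]
        linarith [sum_norm_sum_smul_le hW hcol fun j => x₀ j - x₁ j]

end WeightedSums

theorem ConvexOn.isSubgradient_of_isMinOn_prox {E : Type*} [NormedAddCommGroup E]
    [InnerProductSpace ℝ E] {h : E → ℝ} (hh : ConvexOn ℝ Set.univ h) {α : ℝ} {x p : E}
    (hx : IsMinOn (fun z => h z + (1 / (2 * α)) * ‖z - p‖ ^ 2) Set.univ x) (u : E) :
    h x + ⟪α⁻¹ • (p - x), u - x⟫ ≤ h u := by
  set C := ‖u - x‖ ^ 2 / (2 * α)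
  -- minimality along the segment from `x` to `u`, divided by the step `t`
  have key : ∀ t ∈ Set.Ioc (0 : ℝ) 1, h x + ⟪α⁻¹ • (p - x), u - x⟫ - h u ≤ t * C := by
    rintro t ⟨ht0, ht1⟩
    have hconv : h (x + t • (u - x)) ≤ (1 - t) * h x + t * h u := by
      have := hh.2 (Set.mem_univ x) (Set.mem_univ u) (sub_nonneg.2 ht1) ht0.le (sub_add_cancel 1 t)
      rwa [show (1 - t) • x + t • u = x + t • (u - x) by module] at this
    have hsq : ‖x + t • (u - x) - p‖ ^ 2
        = ‖x - p‖ ^ 2 + 2 * t * ⟪x - p, u - x⟫ + t ^ 2 * ‖u - x‖ ^ 2 := by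
      rw [show x + t • (u - x) - p = (x - p) + t • (u - x) by abel, norm_add_sq_real,
        real_inner_smul_right, norm_smul, Real.norm_eq_abs, abs_of_pos ht0]
      ring
    have hinner : ⟪α⁻¹ • (p - x), u - x⟫ = -(α⁻¹ * ⟪x - p, u - x⟫) := by
      rw [real_inner_smul_left, ← neg_sub x p, inner_neg_left]; ring
    have hmin := isMinOn_univ_iff.1 hx (x + t • (u - x))
    simp only [hsq] at hmin
    refine le_of_mul_le_mul_left ?_ ht0
    rw [hinner]
    simp only [C]
    ring_nf at hmin ⊢
    linarith
  have hlim : Tendsto (fun t => t * C) (𝓝[>] 0) (𝓝 0) := by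
    simpa using ((tendsto_id (x := 𝓝 (0 : ℝ))).mono_left nhdsWithin_le_nhds).mul_const C
  linarith [ge_of_tendsto hlim (eventually_of_mem (Ioc_mem_nhdsGT one_pos) key)]

theorem ConvexOn.norm_sub_le_of_isMinOn_prox {E : Type*} [NormedAddCommGroup E]
    [InnerProductSpace ℝ E] {h : E → ℝ} (hh : ConvexOn ℝ Set.univ h) {α G : ℝ} (hα : 0 < α)
    {x p : E} (hsub : ∀ z, (∀ u, h x + ⟪z, u - x⟫ ≤ h u) → ‖z‖ ≤ G)
    (hx : IsMinOn (fun z => h z + (1 / (2 * α)) * ‖z - p‖ ^ 2) Set.univ x) :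
    ‖x - p‖ ≤ α * G := by
  have := hsub _ (hh.isSubgradient_of_isMinOn_prox hx)
  rwa [norm_smul, norm_inv, Real.norm_of_nonneg hα.le, norm_sub_rev, inv_mul_le_iff₀ hα] at this

theorem abs_sub_one_div_add_two_le_one (k : ℕ) : |((k : ℝ) - 1) / ((k : ℝ) + 2)| ≤ 1 := by
  have hk := k.cast_nonneg (α := ℝ)
  rw [abs_div, abs_of_pos (by positivity : (0 : ℝ) < k + 2), div_le_one (by positivity)]
  exact abs_le.2 ⟨by linarith, by linarith⟩

theorem exists_sq_bound_of_coupled_recursion {a b ε : ℕ → ℝ} {c : ℝ} (ha : ∀ k, 0 ≤ a k)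
    (hc : 0 ≤ c) (hε : ∀ k, 0 ≤ ε k) (hεs : Summable fun k : ℕ => ε k * (k : ℝ) ^ 2)
    (hab : ∀ k, a (k + 1) ≤ a k + c + b k)
    (hba : ∀ k, b (k + 1) ≤ b k + ε (k + 1) * a k + c) :
    ∃ P, ∀ k, a k ≤ P * ((k : ℝ) + 1) ^ 2 := by
  set S : ℕ → ℝ := fun n => ∑ j ∈ range n, ε j * (j : ℝ) ^ 2 with hS
  set T := ∑' j, ε j * (j : ℝ) ^ 2
  have hS_le : ∀ n, S n ≤ T := fun n =>
    hεs.sum_le_tsum _ fun j _ => mul_nonneg (hε j) (sq_nonneg _)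
  obtain ⟨N, hN⟩ : ∃ N, T - S (N + 1) ≤ 1 / 2 := by
    obtain ⟨N, hN⟩ := eventually_atTop.1 <|
      (tendsto_order.1 hεs.hasSum.tendsto_sum_nat).1 _ (sub_lt_self T one_half_pos)
    exact ⟨N, by linarith [hN (N + 1) N.le_succ]⟩
  set P := ∑ j ∈ range (N + 1), a j + c + |b N|
  have hsum0 : 0 ≤ ∑ j ∈ range (N + 1), a j := sum_nonneg fun j _ => ha j
  have hP0 : 0 ≤ P := by positivity
  have hPa : ∀ k ≤ N, a k ≤ P := fun k hk => by
    have := single_le_sum (fun j _ => ha j) (mem_range.2 (Nat.lt_succ_of_le hk))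
    linarith [abs_nonneg (b N)]
  have hP_le : ∀ k : ℕ, P ≤ P * ((k : ℝ) + 1) ^ 2 := fun k =>
    le_mul_of_one_le_right hP0 (one_le_pow₀ (by linarith [k.cast_nonneg (α := ℝ)]))
  -- past `N` the tail of `∑ ε k * k ^ 2` is below `1 / 2`, so `b` grows at most linearly
  -- while `a` stays below `P * (k + 1) ^ 2`
  have key : ∀ k ≥ N, a k ≤ P * ((k : ℝ) + 1) ^ 2 ∧
      b k ≤ b N + c * ((k : ℝ) - N) + P * (S (k + 1) - S (N + 1)) := by
    intro k hk
    induction k, hk using Nat.le_induction with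
    | base => exact ⟨(hPa N le_rfl).trans (hP_le N), by simp⟩
    | succ k hk ih =>
      obtain ⟨iha, ihb⟩ := ih
      have hSk : S (k + 2) = S (k + 1) + ε (k + 1) * ((k : ℝ) + 1) ^ 2 := by
        simp only [hS, sum_range_succ _ (k + 1)]; push_cast; ring
      have hkN : (N : ℝ) ≤ k := by exact_mod_cast hk
      have htail : S (k + 1) - S (N + 1) ≤ 1 / 2 := by linarith [hS_le (k + 1)]
      push_cast
      constructor
      · have hcP : c * ((k : ℝ) - N) ≤ P * k := by
          nlinarith [k.cast_nonneg (α := ℝ), abs_nonneg (b N)]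
        nlinarith [le_abs_self (b N), mul_le_mul_of_nonneg_left htail hP0, hab k]
      · nlinarith [mul_le_mul_of_nonneg_left iha (hε (k + 1)), hba k]
  refine ⟨P, fun k => ?_⟩
  rcases le_or_gt N k with hk | hk
  · exact (key k hk).1
  · exact (hPa k hk.le).trans (hP_le k)

theorem sum_q_polynomial_bound_general {d m : ℕ}
    (α Gg Gh Γ γ : ℝ)
    (hα : 0 < α) (hGg : 0 < Gg) (hGh : 0 < Gh) (hΓ : 0 < Γ)
    (hγ0 : 0 < γ) (hγ1 : γ < 1)
    -- the differentiable local objectives and their gradients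
    (g' : Fin m → EuclideanSpace ℝ (Fin d) → EuclideanSpace ℝ (Fin d))
    (hGgrad : ∀ i z, ‖g' i z‖ ≤ Gg)
    -- the common nondifferentiable objective, with bounded subgradients
    (h : EuclideanSpace ℝ (Fin d) → ℝ)
    (hhconv : ConvexOn ℝ Set.univ h)
    (hsub : ∀ x z : EuclideanSpace ℝ (Fin d),
      (∀ u, h x + ⟪z, u - x⟫ ≤ h u) → ‖z‖ ≤ Gh)
    -- the consensus weight matrices
    (lam : ℕ → Fin m → Fin m → ℝ)
    (hlam_nonneg : ∀ k, 1 ≤ k → ∀ i j, 0 ≤ lam k i j)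
    (hlam_row : ∀ k, 1 ≤ k → ∀ i, ∑ j, lam k i j = 1)
    (hlam_col : ∀ k, 1 ≤ k → ∀ j, ∑ i, lam k i j = 1)
    (hlam_close : ∀ k, 1 ≤ k → ∀ i j, |lam k i j - 1 / m| ≤ Γ * γ ^ k)
    -- the iterates
    (x y q qhat : ℕ → Fin m → EuclideanSpace ℝ (Fin d))
    (hq : ∀ k, 1 ≤ k → ∀ i, q k i = y (k - 1) i - α • g' i (y (k - 1) i))
    (hqhat : ∀ k, 1 ≤ k → ∀ i, qhat k i = ∑ j, lam k i j • q k j)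
    (hx : ∀ k, 1 ≤ k → ∀ i, ∀ z : EuclideanSpace ℝ (Fin d),
      h (x k i) + (1 / (2 * α)) * ‖x k i - qhat k i‖ ^ 2 ≤
        h z + (1 / (2 * α)) * ‖z - qhat k i‖ ^ 2)
    (hy : ∀ k, 1 ≤ k → ∀ i,
      y k i = x k i + (((k : ℝ) - 1) / ((k : ℝ) + 2)) • (x k i - x (k - 1) i))
    :
    ∃ Cq Cq' Cq'' : ℝ, ∀ k, 2 ≤ k →
      ∑ i, ‖q k i‖ ≤ Cq + Cq' * k + Cq'' * (k : ℝ) ^ 2 := by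
  have hprox : ∀ k i, ‖x (k + 1) i - ∑ j, lam (k + 1) i j • q (k + 1) j‖ ≤ α * Gh := fun k i => by
    rw [← hqhat (k + 1) (by omega) i]
    exact hhconv.norm_sub_le_of_isMinOn_prox hα (hsub _)
      (isMinOn_univ_iff.2 (hx (k + 1) (by omega) i))
  have hgrad_step : ∀ k j, ‖q (k + 1) j - y k j‖ ≤ α * Gg := fun k j => by
    rw [hq (k + 1) (by omega) j, add_tsub_cancel_right, sub_sub_cancel_left, norm_neg, norm_smul,
      Real.norm_of_nonneg hα.le]
    exact mul_le_mul_of_nonneg_left (hGgrad j _) hα.le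
  have hmom : ∀ k i, y (k + 1) i = x (k + 1) i
      + ((((k + 1 : ℕ) : ℝ) - 1) / (((k + 1 : ℕ) : ℝ) + 2)) • (x (k + 1) i - x k i) := fun k i =>
    hy (k + 1) (by omega) i
  have hsum_q : ∀ k, ∑ j, ‖q (k + 1) j‖ ≤ ∑ i, ‖y k i‖ + m * (α * Gg) := fun k => by
    simpa using sum_norm_le_sum_norm_add_card_mul (hgrad_step k)
  have hspread : ∀ k i j, ‖x (k + 1) j - x (k + 1) i‖
      ≤ 2 * (α * Gh) + 2 * (Γ * γ ^ (k + 1)) * (∑ i, ‖y k i‖ + m * (α * Gg)) := fun k i j =>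
    (norm_sub_le_of_weights_near (hlam_close _ (by omega)) (hprox k) i j).trans
      (by gcongr; exact hsum_q k)
  have hsummable : Summable fun k : ℕ => 2 * m * Γ * γ ^ k * (k : ℝ) ^ 2 :=
    ((summable_pow_mul_geometric_of_norm_lt_one 2 (by rwa [Real.norm_of_nonneg hγ0.le])).mul_left
      (2 * m * Γ)).congr fun k => by ring
  set c : ℝ := m * (α * (3 * Gh + Gg) + 2 * m * Γ * α * Gg)
  have hY : ∀ k, ∑ i, ‖y (k + 1) i‖ ≤ ∑ i, ‖y k i‖ + c + ∑ i, ‖x (k + 1) i - x k i‖ := fun k => by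
    have := sum_norm_le_of_prox_momentum_step (hlam_nonneg _ (by omega)) (hlam_col _ (by omega))
      (abs_sub_one_div_add_two_le_one _) (hprox k) (hgrad_step k) (hmom k)
    simp only [Fintype.card_fin] at this
    nlinarith [show 0 ≤ (m : ℝ) * α * Gh + m ^ 2 * Γ * α * Gg by positivity]
  have hD : ∀ k, ∑ i, ‖x (k + 1 + 1) i - x (k + 1) i‖ ≤ ∑ i, ‖x (k + 1) i - x k i‖
      + 2 * m * Γ * γ ^ (k + 1) * ∑ i, ‖y k i‖ + c := fun k => by
    have := sum_norm_sub_le_of_mixing_step (hlam_nonneg _ (by omega)) (hlam_row _ (by omega))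
      (hlam_col _ (by omega)) (abs_sub_one_div_add_two_le_one _) (hprox (k + 1))
      (hgrad_step (k + 1)) (hmom k) (hspread k)
    simp only [Fintype.card_fin] at this
    nlinarith [mul_le_of_le_one_right (by positivity : (0 : ℝ) ≤ 2 * m ^ 2 * Γ * α * Gg)
      (pow_le_one₀ hγ0.le hγ1.le (n := k + 1))]
  obtain ⟨P, hP⟩ := exists_sq_bound_of_coupled_recursion (a := fun k => ∑ i, ‖y k i‖)
    (b := fun k => ∑ i, ‖x (k + 1) i - x k i‖) (ε := fun k => 2 * m * Γ * γ ^ k)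
    (fun k => sum_nonneg fun i _ => norm_nonneg _) (by positivity) (fun k => by positivity)
    hsummable hY hD
  refine ⟨m * (α * Gg), 0, P, fun k hk => ?_⟩
  obtain ⟨k, rfl⟩ : ∃ j, k = j + 1 := ⟨k - 1, by omega⟩
  push_cast
  linarith [hsum_q k, hP k]

/-- Polynomial bound on the sum of gradient-step iterate norms. -/
theorem sum_q_polynomial_bound {d m : ℕ} (hm : 1 ≤ m)
    (α L Gg Gh Γ γ : ℝ)
    (hα : 0 < α) (hL : 0 < L) (hGg : 0 < Gg) (hGh : 0 < Gh) (hΓ : 0 < Γ)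
    (hγ0 : 0 < γ) (hγ1 : γ < 1)
    -- the differentiable local objectives and their gradients
    (g : Fin m → EuclideanSpace ℝ (Fin d) → ℝ)
    (g' : Fin m → EuclideanSpace ℝ (Fin d) → EuclideanSpace ℝ (Fin d))
    (hgconv : ∀ i, ConvexOn ℝ Set.univ (g i))
    (hgrad : ∀ i z, HasGradientAt (g i) (g' i z) z)
    (hLip : ∀ i z w, ‖g' i z - g' i w‖ ≤ L * ‖z - w‖)
    (hGgrad : ∀ i z, ‖g' i z‖ ≤ Gg)
    -- the common nondifferentiable objective, with bounded subgradients
    (h : EuclideanSpace ℝ (Fin d) → ℝ)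
    (hhconv : ConvexOn ℝ Set.univ h)
    (hsub : ∀ x z : EuclideanSpace ℝ (Fin d),
      (∀ u, h x + ⟪z, u - x⟫ ≤ h u) → ‖z‖ ≤ Gh)
    -- the consensus weight matrices
    (lam : ℕ → Fin m → Fin m → ℝ)
    (hlam_nonneg : ∀ k, 1 ≤ k → ∀ i j, 0 ≤ lam k i j)
    (hlam_row : ∀ k, 1 ≤ k → ∀ i, ∑ j, lam k i j = 1)
    (hlam_col : ∀ k, 1 ≤ k → ∀ j, ∑ i, lam k i j = 1)
    (hlam_close : ∀ k, 1 ≤ k → ∀ i j, |lam k i j - 1 / m| ≤ Γ * γ ^ k)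
    -- the iterates
    (x y q qhat : ℕ → Fin m → EuclideanSpace ℝ (Fin d))
    (hq : ∀ k, 1 ≤ k → ∀ i, q k i = y (k - 1) i - α • g' i (y (k - 1) i))
    (hqhat : ∀ k, 1 ≤ k → ∀ i, qhat k i = ∑ j, lam k i j • q k j)
    (hx : ∀ k, 1 ≤ k → ∀ i, ∀ z : EuclideanSpace ℝ (Fin d),
      h (x k i) + (1 / (2 * α)) * ‖x k i - qhat k i‖ ^ 2 ≤
        h z + (1 / (2 * α)) * ‖z - qhat k i‖ ^ 2)
    (hy : ∀ k, 1 ≤ k → ∀ i,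
      y k i = x k i + (((k : ℝ) - 1) / ((k : ℝ) + 2)) • (x k i - x (k - 1) i))
    :
    ∃ Cq Cq' Cq'' : ℝ, ∀ k, 2 ≤ k →
      ∑ i, ‖q k i‖ ≤ Cq + Cq' * k + Cq'' * (k : ℝ) ^ 2 :=
  sum_q_polynomial_bound_general α Gg Gh Γ γ hα hGg hGh hΓ hγ0 hγ1 g' hGgrad h hhconv hsub lam
    hlam_nonneg hlam_row hlam_col hlam_close x y q qhat hq hqhat hx hy
end

section
/- (Summability of the weighted gradient-error sequence) Consider the distributed proximal-gradient iterates x_i^(k), y_i^(k), q_i^(k), q̂_i^(k) for agents i = 1,…,m as defined in the context, and define for each k ≥ 1 the gradient error e^(k) = (1/m)·Σ_{i=1}^m ( ∇g_i(y_i^(k−1)) − ∇g_i(ȳ^(k−1)) ), where ȳ^(k−1) = (1/m)Σ_{i=1}^m y_i^(k−1). Then the series Σ_{k=1}^∞ k·‖e^(k)‖ converges (i.e., the sequence k ↦ k·‖e^(k)‖ is summable). -/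
open RealInnerProductSpace
set_option maxHeartbeats 1000000

lemma strong_min_aux {F : Type*} [NormedAddCommGroup F] [InnerProductSpace ℝ F]
    (h : F → ℝ) (hh : ConvexOn ℝ Set.univ h) (c : ℝ)
    (p a : F)
    (hp : ∀ z, h p + c * ‖p - a‖ ^ 2 ≤ h z + c * ‖z - a‖ ^ 2) (z : F) :
    h p + c * ‖p - a‖ ^ 2 + (c / 2) * ‖z - p‖ ^ 2 ≤ h z + c * ‖z - a‖ ^ 2 := by
  have hm := hp ((1/2 : ℝ) • p + (1/2 : ℝ) • z)
  have hconv := hh.2 (Set.mem_univ p) (Set.mem_univ z)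
    (by norm_num : (0:ℝ) ≤ 1/2) (by norm_num : (0:ℝ) ≤ 1/2) (by norm_num)
  simp only [smul_eq_mul] at hconv
  have hpar := parallelogram_law_with_norm ℝ (p - a) (z - a)
  have hsub : (p - a) - (z - a) = p - z := by abel
  rw [hsub] at hpar
  have hpar2 : ‖p - a + (z - a)‖ ^ 2 = 2*‖p - a‖^2 + 2*‖z - a‖^2 - ‖p - z‖^2 := by
    nlinarith [hpar]
  have hmid : (1/2 : ℝ) • p + (1/2 : ℝ) • z - a = (1/2 : ℝ) • ((p - a) + (z - a)) := by
    module
  have hnorm : ‖(1/2 : ℝ) • p + (1/2 : ℝ) • z - a‖ ^ 2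
      = (1/4 : ℝ) * ‖(p - a) + (z - a)‖ ^ 2 := by
    rw [hmid, norm_smul, mul_pow]
    norm_num
  have hkey : c * ‖(1/2 : ℝ) • p + (1/2 : ℝ) • z - a‖ ^ 2
      = c * ((1/2)*‖p - a‖^2 + (1/2)*‖z - a‖^2 - (1/4)*‖p - z‖^2) := by
    rw [hnorm, hpar2]; ring
  have hzp : ‖z - p‖ = ‖p - z‖ := norm_sub_rev _ _
  rw [hzp]
  nlinarith [hm, hconv, hkey]

lemma prox_two_lip {F : Type*} [NormedAddCommGroup F] [InnerProductSpace ℝ F]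
    (h : F → ℝ) (hh : ConvexOn ℝ Set.univ h) (c : ℝ) (hc : 0 < c)
    (p q a b : F)
    (hp : ∀ z, h p + c * ‖p - a‖ ^ 2 ≤ h z + c * ‖z - a‖ ^ 2)
    (hq : ∀ z, h q + c * ‖q - b‖ ^ 2 ≤ h z + c * ‖z - b‖ ^ 2) :
    ‖p - q‖ ≤ 2 * ‖a - b‖ := by
  have h1 := strong_min_aux h hh c p a hp q
  have h2 := strong_min_aux h hh c q b hq p
  have hqp : ‖q - p‖ = ‖p - q‖ := norm_sub_rev _ _
  rw [hqp] at h1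
  have hsum : ‖p - q‖ ^ 2 ≤ ‖q - a‖ ^ 2 - ‖q - b‖ ^ 2 + ‖p - b‖ ^ 2 - ‖p - a‖ ^ 2 := by
    nlinarith [h1, h2, hc]
  have hid : ‖q - a‖ ^ 2 - ‖q - b‖ ^ 2 + ‖p - b‖ ^ 2 - ‖p - a‖ ^ 2
      = 2 * ⟪p - q, a - b⟫ := by
    simp only [norm_sub_sq_real, inner_sub_left, inner_sub_right]
    ring
  have hcs : ⟪p - q, a - b⟫ ≤ ‖p - q‖ * ‖a - b‖ := real_inner_le_norm _ _
  rcases eq_or_lt_of_le (norm_nonneg (p - q)) with h0 | h0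
  · rw [← h0]; positivity
  · nlinarith [hsum, hid, hcs, h0]

/-- Summability of the weighted gradient-error sequence. -/
theorem weighted_gradient_error_summable {d m : ℕ} (hm : 1 ≤ m)
    (α L Gg Gh Γ γ : ℝ)
    (hα : 0 < α) (hL : 0 < L) (hGg : 0 < Gg) (hGh : 0 < Gh) (hΓ : 0 < Γ)
    (hγ0 : 0 < γ) (hγ1 : γ < 1)
    -- the differentiable local objectives and their gradients
    (g : Fin m → EuclideanSpace ℝ (Fin d) → ℝ)
    (g' : Fin m → EuclideanSpace ℝ (Fin d) → EuclideanSpace ℝ (Fin d))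
    (hgconv : ∀ i, ConvexOn ℝ Set.univ (g i))
    (hgrad : ∀ i z, HasGradientAt (g i) (g' i z) z)
    (hLip : ∀ i z w, ‖g' i z - g' i w‖ ≤ L * ‖z - w‖)
    (hGgrad : ∀ i z, ‖g' i z‖ ≤ Gg)
    -- the common nondifferentiable objective, with bounded subgradients
    (h : EuclideanSpace ℝ (Fin d) → ℝ)
    (hhconv : ConvexOn ℝ Set.univ h)
    (hsub : ∀ x z : EuclideanSpace ℝ (Fin d),
      (∀ u, h x + ⟪z, u - x⟫ ≤ h u) → ‖z‖ ≤ Gh)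
    -- the consensus weight matrices
    (lam : ℕ → Fin m → Fin m → ℝ)
    (hlam_nonneg : ∀ k, 1 ≤ k → ∀ i j, 0 ≤ lam k i j)
    (hlam_row : ∀ k, 1 ≤ k → ∀ i, ∑ j, lam k i j = 1)
    (hlam_col : ∀ k, 1 ≤ k → ∀ j, ∑ i, lam k i j = 1)
    (hlam_close : ∀ k, 1 ≤ k → ∀ i j, |lam k i j - 1 / m| ≤ Γ * γ ^ k)
    -- the iterates
    (x y q qhat : ℕ → Fin m → EuclideanSpace ℝ (Fin d))
    (hq : ∀ k, 1 ≤ k → ∀ i, q k i = y (k - 1) i - α • g' i (y (k - 1) i))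
    (hqhat : ∀ k, 1 ≤ k → ∀ i, qhat k i = ∑ j, lam k i j • q k j)
    (hx : ∀ k, 1 ≤ k → ∀ i, ∀ z : EuclideanSpace ℝ (Fin d),
      h (x k i) + (1 / (2 * α)) * ‖x k i - qhat k i‖ ^ 2 ≤
        h z + (1 / (2 * α)) * ‖z - qhat k i‖ ^ 2)
    (hy : ∀ k, 1 ≤ k → ∀ i,
      y k i = x k i + (((k : ℝ) - 1) / ((k : ℝ) + 2)) • (x k i - x (k - 1) i))
    -- the gradient error of the inexact centralized formulation
    (e : ℕ → EuclideanSpace ℝ (Fin d))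
    (he : ∀ k, 1 ≤ k →
      e k = (1 / (m : ℝ)) •
        ∑ i, (g' i (y (k - 1) i) - g' i ((1 / (m : ℝ)) • ∑ j, y (k - 1) j))) :
    Summable (fun k : ℕ => (k : ℝ) * ‖e k‖) := by
  have hm0 : (0:ℝ) < (m:ℝ) := by exact_mod_cast hm
  have hc : (0:ℝ) < 1 / (2*α) := by positivity
  set S : ℕ → ℝ := fun k => ∑ i, ∑ j, ‖x k i - x k j‖ with hSdef
  have hS0 : ∀ k, 0 ≤ S k := fun k =>
    Finset.sum_nonneg fun i _ => Finset.sum_nonneg fun j _ => norm_nonneg _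
  -- prox is 2-Lipschitz
  have hxdiff : ∀ k, 1 ≤ k → ∀ i j : Fin m,
      ‖x k i - x k j‖ ≤ 2 * ‖qhat k i - qhat k j‖ := by
    intro k hk i j
    exact prox_two_lip h hhconv _ hc _ _ _ _ (hx k hk i) (hx k hk j)
  -- mixing step
  have hqhatdiff : ∀ k, 1 ≤ k → ∀ i j : Fin m,
      ‖qhat k i - qhat k j‖ ≤ (2*Γ*γ^k) * ∑ l, ‖q k l - q k j‖ := by
    intro k hk i j
    have hsum0 : ∑ l, (lam k i l - lam k j l) = 0 := by
      rw [Finset.sum_sub_distrib, hlam_row k hk i, hlam_row k hk j]; ring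
    have hrw : qhat k i - qhat k j = ∑ l, (lam k i l - lam k j l) • (q k l - q k j) := by
      rw [hqhat k hk i, hqhat k hk j]
      simp only [smul_sub, sub_smul, Finset.sum_sub_distrib, ← Finset.sum_smul,
        hlam_row k hk i, hlam_row k hk j, one_smul]
      abel
    rw [hrw]
    refine (norm_sum_le _ _).trans ?_
    rw [Finset.mul_sum]
    apply Finset.sum_le_sum
    intro l _
    rw [norm_smul, Real.norm_eq_abs]
    refine mul_le_mul_of_nonneg_right ?_ (norm_nonneg _)
    have h1 := hlam_close k hk i l
    have h2 := hlam_close k hk j l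
    have h3 : |lam k i l - lam k j l| ≤ |lam k i l - 1/m| + |lam k j l - 1/m| := by
      have := abs_sub_le (lam k i l) ((1:ℝ)/m) (lam k j l)
      rw [abs_sub_comm ((1:ℝ)/m) (lam k j l)] at this
      exact this
    linarith
  -- gradient step
  have hqdiff : ∀ k, 1 ≤ k → ∀ l j : Fin m,
      ‖q k l - q k j‖ ≤ ‖y (k-1) l - y (k-1) j‖ + 2*(α*Gg) := by
    intro k hk l j
    rw [hq k hk l, hq k hk j]
    have hrw : (y (k-1) l - α • g' l (y (k-1) l)) - (y (k-1) j - α • g' j (y (k-1) j))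
        = (y (k-1) l - y (k-1) j) + (α • g' j (y (k-1) j) - α • g' l (y (k-1) l)) := by
      module
    rw [hrw]
    refine (norm_add_le _ _).trans ?_
    refine add_le_add le_rfl ?_
    refine (norm_sub_le _ _).trans ?_
    rw [norm_smul, norm_smul, Real.norm_eq_abs, abs_of_pos hα]
    have := hGgrad j (y (k-1) j)
    have := hGgrad l (y (k-1) l)
    nlinarith
  -- extrapolation step
  have hydiff : ∀ n, 1 ≤ n → ∀ i j : Fin m,
      ‖y n i - y n j‖ ≤ 2*‖x n i - x n j‖ + ‖x (n-1) i - x (n-1) j‖ := by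
    intro n hn i j
    set β := ((n:ℝ)-1)/((n:ℝ)+2) with hβdef
    have hn1 : (1:ℝ) ≤ (n:ℝ) := by exact_mod_cast hn
    have hβ0 : 0 ≤ β := by apply div_nonneg <;> linarith
    have hβ1 : β ≤ 1 := by rw [div_le_one (by linarith)]; linarith
    have hrw : y n i - y n j
        = (x n i - x n j) + β • ((x n i - x n j) - (x (n-1) i - x (n-1) j)) := by
      rw [hy n hn i, hy n hn j, hβdef]
      module
    rw [hrw]
    refine (norm_add_le _ _).trans ?_
    have h2 : ‖β • ((x n i - x n j) - (x (n-1) i - x (n-1) j))‖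
        ≤ ‖x n i - x n j‖ + ‖x (n-1) i - x (n-1) j‖ := by
      rw [norm_smul, Real.norm_eq_abs, abs_of_nonneg hβ0]
      calc β * ‖(x n i - x n j) - (x (n-1) i - x (n-1) j)‖
          ≤ 1 * ‖(x n i - x n j) - (x (n-1) i - x (n-1) j)‖ :=
            mul_le_mul_of_nonneg_right hβ1 (norm_nonneg _)
        _ = ‖(x n i - x n j) - (x (n-1) i - x (n-1) j)‖ := one_mul _
        _ ≤ _ := norm_sub_le _ _
    linarith
  -- the recursion
  have hrec : ∀ k, 2 ≤ k →
      S k ≤ (4*Γ*(m:ℝ)) * γ^k * (2*S (k-1) + S (k-2) + 2*(α*Gg)*(m:ℝ)^2) := by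
    intro k hk2
    have hk1 : 1 ≤ k := le_trans (by norm_num) hk2
    have hk11 : 1 ≤ k - 1 := by omega
    have hk12 : (k-1) - 1 = k - 2 := by omega
    have hq2 : ∀ l j : Fin m, ‖q k l - q k j‖
        ≤ 2*‖x (k-1) l - x (k-1) j‖ + ‖x (k-2) l - x (k-2) j‖ + 2*(α*Gg) := by
      intro l j
      have := hqdiff k hk1 l j
      have h2 := hydiff (k-1) hk11 l j
      rw [hk12] at h2
      linarith
    calc S k ≤ ∑ i : Fin m, ∑ j : Fin m, 2 * ‖qhat k i - qhat k j‖ := by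
          refine Finset.sum_le_sum fun i _ => Finset.sum_le_sum fun j _ => ?_
          exact hxdiff k hk1 i j
      _ ≤ ∑ i : Fin m, ∑ j : Fin m, 2 * ((2*Γ*γ^k) * ∑ l, ‖q k l - q k j‖) := by
          refine Finset.sum_le_sum fun i _ => Finset.sum_le_sum fun j _ => ?_
          exact mul_le_mul_of_nonneg_left (hqhatdiff k hk1 i j) (by norm_num)
      _ = (4*Γ*γ^k) * ∑ i : Fin m, ∑ j : Fin m, ∑ l, ‖q k l - q k j‖ := by
          rw [Finset.mul_sum]
          refine Finset.sum_congr rfl fun i _ => ?_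
          rw [Finset.mul_sum]
          refine Finset.sum_congr rfl fun j _ => ?_
          ring
      _ = (4*Γ*γ^k) * ((m:ℝ) * ∑ j : Fin m, ∑ l, ‖q k l - q k j‖) := by
          rw [Finset.sum_const, Finset.card_univ, Fintype.card_fin, nsmul_eq_mul]
      _ ≤ (4*Γ*γ^k) * ((m:ℝ) * ∑ j : Fin m, ∑ l : Fin m,
            (2*‖x (k-1) l - x (k-1) j‖ + ‖x (k-2) l - x (k-2) j‖ + 2*(α*Gg))) := by
          refine mul_le_mul_of_nonneg_left (mul_le_mul_of_nonneg_left ?_ hm0.le)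
            (by positivity)
          exact Finset.sum_le_sum fun j _ => Finset.sum_le_sum fun l _ => hq2 l j
      _ = (4*Γ*(m:ℝ)) * γ^k * (2*S (k-1) + S (k-2) + 2*(α*Gg)*(m:ℝ)^2) := by
          have hswap : ∀ n : ℕ, ∑ j : Fin m, ∑ l : Fin m, ‖x n l - x n j‖ = S n := by
            intro n
            rw [Finset.sum_comm]
          simp only [Finset.sum_add_distrib, Finset.sum_const, Finset.card_univ,
            Fintype.card_fin, nsmul_eq_mul, ← Finset.mul_sum, hswap]
          ring
  -- geometric decay of the consensus error
  set a := 4*Γ*(m:ℝ) with hadef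
  set b := 2*(α*Gg)*(m:ℝ)^2 with hbdef
  have ha0 : 0 < a := by positivity
  have hb0 : 0 < b := by positivity
  obtain ⟨K', hK'⟩ := exists_pow_lt_of_lt_one (show (0:ℝ) < 1/(6*a) by positivity) hγ1
  set K := K' + 2 with hKdef
  set C := (∑ k ∈ Finset.range K, S k / γ ^ k) + 2*a*b with hCdef
  have hsum_nonneg : ∀ i ∈ Finset.range K, 0 ≤ S i / γ ^ i := fun i _ =>
    div_nonneg (hS0 i) (pow_pos hγ0 i).le
  have hC2ab : 2*a*b ≤ C := le_add_of_nonneg_left (Finset.sum_nonneg hsum_nonneg)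
  have hC0 : (0:ℝ) ≤ C := le_trans (by positivity) hC2ab
  have h6 : 6*a*γ^K' < 1 := by
    have h7 := mul_lt_mul_of_pos_left hK' (show (0:ℝ) < 6*a by positivity)
    rwa [mul_one_div, div_self (by positivity)] at h7
  have hgeo : ∀ k, S k ≤ C * γ ^ k := by
    intro k
    induction k using Nat.strong_induction_on with
    | _ k ih =>
      by_cases hk : k < K
      · have h1 : S k / γ^k ≤ C := by
          have h2 := Finset.single_le_sum hsum_nonneg (Finset.mem_range.mpr hk)
          nlinarith [hb0, ha0]
        calc S k = (S k / γ^k) * γ^k := by field_simp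
          _ ≤ C * γ^k := mul_le_mul_of_nonneg_right h1 (pow_pos hγ0 k).le
      · push_neg at hk
        have hk2 : 2 ≤ k := le_trans (by omega) hk
        have ih1 := ih (k-1) (by omega)
        have ih2 := ih (k-2) (by omega)
        have hrk := hrec k hk2
        have hpow1 : γ ^ (k-1) ≤ γ ^ (k-2) :=
          pow_le_pow_of_le_one hγ0.le hγ1.le (by omega)
        have hpow2 : γ ^ (k-2) ≤ γ ^ K' :=
          pow_le_pow_of_le_one hγ0.le hγ1.le (by omega)
        have p1 : C * γ^(k-1) ≤ C * γ^(k-2) := mul_le_mul_of_nonneg_left hpow1 hC0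
        have p2 : C * γ^(k-2) ≤ C * γ^K' := mul_le_mul_of_nonneg_left hpow2 hC0
        have t1 : 2*S (k-1) + S (k-2) + b ≤ 3*C*γ^K' + b := by linarith
        have t3 : a * (3*C*γ^K' + b) ≤ C := by
          have h8 : (6*a*γ^K') * C ≤ 1 * C := mul_le_mul_of_nonneg_right h6.le hC0
          nlinarith [hC2ab]
        calc S k ≤ a * γ^k * (2*S (k-1) + S (k-2) + b) := hrk
          _ ≤ a * γ^k * (3*C*γ^K' + b) :=
              mul_le_mul_of_nonneg_left t1 (by positivity)
          _ = γ^k * (a * (3*C*γ^K' + b)) := by ring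
          _ ≤ γ^k * C := mul_le_mul_of_nonneg_left t3 (pow_pos hγ0 k).le
          _ = C * γ^k := mul_comm _ _
  -- bound on the gradient error
  have hmne : ((m:ℝ)) ≠ 0 := ne_of_gt hm0
  have hebound : ∀ n : ℕ, ‖e (n+2)‖ ≤ (L/(m:ℝ)^2*(3*C)) * γ ^ n := by
    intro n
    have hk1 : 1 ≤ n + 2 := by omega
    have hidx : n + 2 - 1 = n + 1 := by omega
    rw [he (n+2) hk1, hidx]
    have hbar : ∀ i : Fin m, ‖y (n+1) i - (1/(m:ℝ)) • ∑ j, y (n+1) j‖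
        ≤ (1/(m:ℝ)) * ∑ j, ‖y (n+1) i - y (n+1) j‖ := by
      intro i
      have h1 : ∑ j : Fin m, (y (n+1) i - y (n+1) j)
          = (m:ℝ) • y (n+1) i - ∑ j, y (n+1) j := by
        rw [Finset.sum_sub_distrib, Finset.sum_const, Finset.card_univ, Fintype.card_fin]
        congr 1
        exact (Nat.cast_smul_eq_nsmul ℝ m _).symm
      have h2 : y (n+1) i - (1/(m:ℝ)) • ∑ j, y (n+1) j
          = (1/(m:ℝ)) • ∑ j : Fin m, (y (n+1) i - y (n+1) j) := by
        rw [h1, smul_sub, smul_smul, one_div_mul_cancel hmne, one_smul]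
      rw [h2, norm_smul, Real.norm_eq_abs, abs_of_pos (by positivity)]
      exact mul_le_mul_of_nonneg_left (norm_sum_le _ _) (by positivity)
    have hstep : ‖(1/(m:ℝ)) • ∑ i : Fin m,
          (g' i (y (n+1) i) - g' i ((1/(m:ℝ)) • ∑ j, y (n+1) j))‖
        ≤ (1/(m:ℝ)) * ∑ i, L * ((1/(m:ℝ)) * ∑ j, ‖y (n+1) i - y (n+1) j‖) := by
      rw [norm_smul, Real.norm_eq_abs, abs_of_pos (by positivity)]
      refine mul_le_mul_of_nonneg_left ?_ (by positivity)
      refine (norm_sum_le _ _).trans (Finset.sum_le_sum fun i _ => ?_)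
      refine (hLip i _ _).trans ?_
      exact mul_le_mul_of_nonneg_left (hbar i) hL.le
    refine hstep.trans ?_
    have hyd : ∀ i j : Fin m, ‖y (n+1) i - y (n+1) j‖
        ≤ 2*‖x (n+1) i - x (n+1) j‖ + ‖x n i - x n j‖ := by
      intro i j
      have h3 := hydiff (n+1) (by omega) i j
      rwa [show n + 1 - 1 = n by omega] at h3
    calc (1/(m:ℝ)) * ∑ i, L * ((1/(m:ℝ)) * ∑ j, ‖y (n+1) i - y (n+1) j‖)
        ≤ (1/(m:ℝ)) * ∑ i : Fin m, L * ((1/(m:ℝ)) *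
            ∑ j : Fin m, (2*‖x (n+1) i - x (n+1) j‖ + ‖x n i - x n j‖)) := by
          refine mul_le_mul_of_nonneg_left (Finset.sum_le_sum fun i _ => ?_) (by positivity)
          refine mul_le_mul_of_nonneg_left (mul_le_mul_of_nonneg_left
            (Finset.sum_le_sum fun j _ => hyd i j) (by positivity)) hL.le
      _ = L/(m:ℝ)^2 * (2*S (n+1) + S n) := by
          simp only [Finset.sum_add_distrib, ← Finset.mul_sum, ← mul_assoc, hSdef]
          ring
      _ ≤ L/(m:ℝ)^2 * (2*(C * γ^(n+1)) + C * γ^n) := by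
          refine mul_le_mul_of_nonneg_left ?_ (by positivity)
          have := hgeo (n+1)
          have := hgeo n
          linarith
      _ ≤ (L/(m:ℝ)^2*(3*C)) * γ ^ n := by
          have hpow : γ^(n+1) ≤ γ^n := pow_le_pow_of_le_one hγ0.le hγ1.le (by omega)
          have h9 : C * γ^(n+1) ≤ C * γ^n := mul_le_mul_of_nonneg_left hpow hC0
          have h10 : 2*(C * γ^(n+1)) + C * γ^n ≤ 3*(C*γ^n) := by linarith
          calc L/(m:ℝ)^2 * (2*(C * γ^(n+1)) + C * γ^n)
              ≤ L/(m:ℝ)^2 * (3*(C*γ^n)) :=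
                mul_le_mul_of_nonneg_left h10 (by positivity)
            _ = (L/(m:ℝ)^2*(3*C)) * γ^n := by ring
  -- conclusion by comparison
  rw [← summable_nat_add_iff 2]
  have hg : Summable (fun n : ℕ => (n:ℝ) * γ ^ n) := by
    simpa using summable_pow_mul_geometric_of_norm_lt_one 1
      (show ‖γ‖ < 1 by rw [Real.norm_eq_abs, abs_of_pos hγ0]; exact hγ1)
  have hsum1 : Summable (fun n : ℕ =>
      (L/(m:ℝ)^2*(3*C)) * ((n:ℝ) * γ ^ n) + (2*(L/(m:ℝ)^2*(3*C))) * γ ^ n) :=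
    (hg.mul_left _).add ((summable_geometric_of_lt_one hγ0.le hγ1).mul_left _)
  refine Summable.of_nonneg_of_le (fun n => by positivity) (fun n => ?_) hsum1
  have hb2 := hebound n
  have hcast : ((n + 2 : ℕ) : ℝ) = (n:ℝ) + 2 := by push_cast; ring
  calc ((n+2:ℕ):ℝ) * ‖e (n+2)‖ ≤ ((n:ℝ)+2) * ((L/(m:ℝ)^2*(3*C)) * γ ^ n) := by
        rw [hcast]
        refine mul_le_mul_of_nonneg_left hb2 (by positivity)
    _ = (L/(m:ℝ)^2*(3*C)) * ((n:ℝ) * γ ^ n) + (2*(L/(m:ℝ)^2*(3*C))) * γ ^ n := by ring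
end

section
/- (Summability of the weighted proximal-error sequence) Consider the distributed proximal-gradient iterates x_i^(k), y_i^(k), q_i^(k), q̂_i^(k) for agents i = 1,…,m as defined in the context, with q̄^(k) = (1/m)Σ_{i=1}^m q̂_i^(k). Let {ε^(k)}_{k≥1} be any sequence of nonnegative reals satisfying, for every k ≥ 1, ε^(k) ≤ (2·G_h/m)·Σ_{i=1}^m ‖q̂_i^(k) − q̄^(k)‖ + (1/(2α))·( (1/m)·Σ_{i=1}^m ‖q̂_i^(k) − q̄^(k)‖ )². Then the series Σ_{k=1}^∞ k·√(ε^(k)) converges (i.e., the sequence k ↦ k·√(ε^(k)) is summable). -/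
/-!
Measure the disagreement between the agents by the spread `∑ l, ‖q k l - q k p‖` of the
gradient steps about a fixed agent `p`. Mixing with weights within `Γ γ ^ k` of uniform puts
every `q̂ k i` within `Γ γ ^ k` times this spread of the mean; the proximal map is nonexpansive,
so the spread of `x k` is of the same order; the spread of `y k` is at most twice that of `x k`
plus that of `x (k - 1)`, and the gradient step adds at most `2 m α Gg`. The spread therefore satisfies a two-step recursion with
geometrically vanishing coefficients, so it is bounded. Hence the consensus error, and with it
`ε k`, is `O(γ ^ k)`, and `k √(ε k) = O(k (√γ) ^ k)` is summable.
-/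

open RealInnerProductSpace Filter Topology Set

section Prox

variable {E : Type*} [NormedAddCommGroup E] [InnerProductSpace ℝ E]

/-- With `c = 1 / (2 * α)` this says `x = prox_{α f} a`. -/
def IsProxPoint (f : E → ℝ) (c : ℝ) (a x : E) : Prop :=
  ∀ z, f x + c * ‖x - a‖ ^ 2 ≤ f z + c * ‖z - a‖ ^ 2

variable {f : E → ℝ} {c : ℝ}

theorem IsProxPoint.add_mul_sq_norm_sub_le {a x : E} (hx : IsProxPoint f c a x)
    (hf : ConvexOn ℝ univ f) (z : E) :
    f x + c * ‖x - a‖ ^ 2 + c * ‖z - x‖ ^ 2 ≤ f z + c * ‖z - a‖ ^ 2 := by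
  -- Compare `x` with `x + t • (z - x)`: the convexity defect `t (1 - t) ‖z - x‖ ^ 2` of the
  -- quadratic term, divided by `t`, survives as `t → 0`.
  have hsegment : ∀ t ∈ Ioc (0 : ℝ) 1,
      f x + c * ‖x - a‖ ^ 2 + (1 - t) * (c * ‖z - x‖ ^ 2) ≤ f z + c * ‖z - a‖ ^ 2 := by
    rintro t ⟨ht0, ht1⟩
    have hmin := hx (x + t • (z - x))
    have hconv : f (x + t • (z - x)) ≤ (1 - t) * f x + t * f z := by
      have := hf.2 (mem_univ x) (mem_univ z) (sub_nonneg.2 ht1) ht0.le (by ring)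
      rwa [show (1 - t) • x + t • z = x + t • (z - x) by module, smul_eq_mul, smul_eq_mul] at this
    have hsq : ‖x + t • (z - x) - a‖ ^ 2 =
        (1 - t) * ‖x - a‖ ^ 2 + t * ‖z - a‖ ^ 2 - t * (1 - t) * ‖z - x‖ ^ 2 := by
      rw [show x + t • (z - x) - a = (x - a) + t • (z - x) by abel,
        show z - a = (x - a) + (z - x) by abel, norm_add_sq_real, norm_add_sq_real,
        real_inner_smul_right, norm_smul, Real.norm_eq_abs, abs_of_pos ht0]
      ring
    rw [hsq] at hmin
    nlinarith
  have hlim : Tendsto (fun t : ℝ => f x + c * ‖x - a‖ ^ 2 + (1 - t) * (c * ‖z - x‖ ^ 2))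
      (𝓝[>] 0) (𝓝 (f x + c * ‖x - a‖ ^ 2 + c * ‖z - x‖ ^ 2)) := by
    have : Continuous fun t : ℝ => f x + c * ‖x - a‖ ^ 2 + (1 - t) * (c * ‖z - x‖ ^ 2) := by
      fun_prop
    simpa using (this.tendsto 0).mono_left nhdsWithin_le_nhds
  exact le_of_tendsto hlim (eventually_of_mem (Ioc_mem_nhdsGT one_pos) hsegment)

theorem IsProxPoint.norm_sub_le {a₁ a₂ x₁ x₂ : E} (hx₁ : IsProxPoint f c a₁ x₁)
    (hx₂ : IsProxPoint f c a₂ x₂) (hf : ConvexOn ℝ univ f) (hc : 0 < c) :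
    ‖x₁ - x₂‖ ≤ ‖a₁ - a₂‖ := by
  have h₁ := hx₁.add_mul_sq_norm_sub_le hf x₂
  have h₂ := hx₂.add_mul_sq_norm_sub_le hf x₁
  have hexpand : ‖x₂ - a₁‖ ^ 2 - ‖x₁ - a₁‖ ^ 2 + ‖x₁ - a₂‖ ^ 2 - ‖x₂ - a₂‖ ^ 2 =
      2 * ⟪a₁ - a₂, x₁ - x₂⟫ := by
    have hsplit : ⟪a₁ - a₂, x₁ - x₂⟫ =
        ⟪x₂ - a₂, x₁ - x₂⟫ - ⟪x₁ - a₁, x₁ - x₂⟫ + ‖x₁ - x₂‖ ^ 2 := by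
      rw [← inner_sub_left, ← real_inner_self_eq_norm_sq, ← inner_add_left]
      congr 1
      abel
    rw [show x₂ - a₁ = (x₁ - a₁) - (x₁ - x₂) by abel,
      show x₁ - a₂ = (x₂ - a₂) + (x₁ - x₂) by abel, norm_sub_sq_real, norm_add_sq_real, hsplit]
    ring
  have hfirm : ‖x₁ - x₂‖ ^ 2 ≤ ‖a₁ - a₂‖ * ‖x₁ - x₂‖ := by
    rw [norm_sub_rev x₂ x₁] at h₁
    nlinarith [real_inner_le_norm (a₁ - a₂) (x₁ - x₂)]
  nlinarith [norm_nonneg (x₁ - x₂), norm_nonneg (a₁ - a₂)]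

end Prox

section Spread

variable {ι E : Type*} [Fintype ι] [NormedAddCommGroup E]

def spreadAbout (v : ι → E) (p : ι) : ℝ := ∑ l, ‖v l - v p‖

theorem spreadAbout_nonneg (v : ι → E) (p : ι) : 0 ≤ spreadAbout v p :=
  Finset.sum_nonneg fun _ _ => norm_nonneg _

theorem spreadAbout_le_of_forall_norm_sub_le {v : ι → E} {c : E} {r : ℝ}
    (hv : ∀ j, ‖v j - c‖ ≤ r) (p : ι) : spreadAbout v p ≤ Fintype.card ι * (2 * r) := by
  calc spreadAbout v p ≤ ∑ _l : ι, 2 * r :=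
        Finset.sum_le_sum fun l _ => (norm_sub_le_norm_sub_add_norm_sub _ c _).trans
          (by linarith [hv l, norm_sub_rev (v p) c, hv p])
    _ = Fintype.card ι * (2 * r) := by simp

variable [NormedSpace ℝ E]

theorem norm_sum_smul_le_mul_spreadAbout {w : ι → ℝ} {b : ℝ} (hw : ∑ l, w l = 0)
    (hb : ∀ l, |w l| ≤ b) (v : ι → E) (p : ι) :
    ‖∑ l, w l • v l‖ ≤ b * spreadAbout v p := by
  have hcenter : ∑ l, w l • v l = ∑ l, w l • (v l - v p) := by
    simp only [smul_sub, Finset.sum_sub_distrib, ← Finset.sum_smul, hw, zero_smul, sub_zero]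
  calc ‖∑ l, w l • v l‖ ≤ ∑ l, ‖w l • (v l - v p)‖ := hcenter ▸ norm_sum_le _ _
    _ ≤ ∑ l, b * ‖v l - v p‖ := by
      gcongr with l
      rw [norm_smul, Real.norm_eq_abs]
      exact mul_le_mul_of_nonneg_right (hb l) (norm_nonneg _)
    _ = b * spreadAbout v p := (Finset.mul_sum _ _ _).symm

theorem norm_sum_smul_sub_mean_le {W : ι → ι → ℝ} {b : ℝ} (hrow : ∀ i, ∑ l, W i l = 1)
    (hcol : ∀ l, ∑ i, W i l = 1) (hclose : ∀ i l, |W i l - (Fintype.card ι : ℝ)⁻¹| ≤ b)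
    (v : ι → E) (i p : ι) :
    ‖∑ l, W i l • v l - (Fintype.card ι : ℝ)⁻¹ • ∑ j, ∑ l, W j l • v l‖ ≤
      b * spreadAbout v p := by
  have hcard : (Fintype.card ι : ℝ) ≠ 0 := Nat.cast_ne_zero.2 (Fintype.card_pos_iff.2 ⟨i⟩).ne'
  have hmean : ∑ j, ∑ l, W j l • v l = ∑ l, v l := by
    rw [Finset.sum_comm]
    simp only [← Finset.sum_smul, hcol, one_smul]
  have hzero : ∑ l, (W i l - (Fintype.card ι : ℝ)⁻¹) = 0 := by
    simp [Finset.sum_sub_distrib, hrow, hcard]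
  rw [hmean, Finset.smul_sum, ← Finset.sum_sub_distrib]
  simp only [← sub_smul]
  exact norm_sum_smul_le_mul_spreadAbout hzero (hclose i) v p

theorem spreadAbout_add_smul_sub_le {θ : ℝ} (hθ₀ : 0 ≤ θ) (hθ₁ : θ ≤ 1) (x x' : ι → E) (p : ι) :
    spreadAbout (fun j => x j + θ • (x j - x' j)) p ≤ 2 * spreadAbout x p + spreadAbout x' p := by
  unfold spreadAbout
  rw [Finset.mul_sum, ← Finset.sum_add_distrib]
  gcongr with j
  have hsplit : x j + θ • (x j - x' j) - (x p + θ • (x p - x' p)) =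
      (x j - x p) + θ • ((x j - x p) - (x' j - x' p)) := by module
  calc ‖x j + θ • (x j - x' j) - (x p + θ • (x p - x' p))‖
      ≤ ‖x j - x p‖ + θ * ‖(x j - x p) - (x' j - x' p)‖ := by
        rw [hsplit]
        refine (norm_add_le _ _).trans ?_
        rw [norm_smul, Real.norm_of_nonneg hθ₀]
    _ ≤ ‖x j - x p‖ + 1 * (‖x j - x p‖ + ‖x' j - x' p‖) := by
        gcongr
        exact norm_sub_le _ _
    _ = 2 * ‖x j - x p‖ + ‖x' j - x' p‖ := by ring

theorem spreadAbout_sub_smul_le {α B : ℝ} (hα : 0 ≤ α) {G : ι → E} (hG : ∀ j, ‖G j‖ ≤ B)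
    (y : ι → E) (p : ι) :
    spreadAbout (fun j => y j - α • G j) p ≤ spreadAbout y p + Fintype.card ι * (2 * α * B) := by
  unfold spreadAbout
  rw [show (Fintype.card ι : ℝ) * (2 * α * B) = ∑ _j : ι, 2 * α * B by simp,
    ← Finset.sum_add_distrib]
  gcongr with j
  have hsplit : y j - α • G j - (y p - α • G p) = (y j - y p) - α • (G j - G p) := by module
  rw [hsplit]
  refine (norm_sub_le _ _).trans (add_le_add le_rfl ?_)
  rw [norm_smul, Real.norm_of_nonneg hα]
  nlinarith [norm_sub_le (G j) (G p), hG j, hG p]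

end Spread

theorem bddAbove_range_of_le_two_step {Q a b : ℕ → ℝ} {C : ℝ} (hQ : ∀ k, 0 ≤ Q k)
    (ha : Tendsto a atTop (𝓝 0)) (hb : Tendsto b atTop (𝓝 0))
    (hrec : ∀ᶠ k in atTop, Q (k + 2) ≤ a k * Q (k + 1) + b k * Q k + C) :
    BddAbove (range Q) := by
  obtain ⟨N, hN⟩ := eventually_atTop.1 <|
    (ha.eventually_le_const (by norm_num : (0 : ℝ) < 1 / 4)).and <|
      (hb.eventually_le_const (by norm_num : (0 : ℝ) < 1 / 4)).and hrec
  -- past `N`, `Q k, Q (k + 1) ≤ M` gives `Q (k + 2) ≤ M / 2 + C ≤ M`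
  set M := max (∑ k ∈ Finset.range (N + 2), Q k) (2 * C)
  refine ⟨M, forall_mem_range.2 fun k => ?_⟩
  induction k using Nat.strong_induction_on with
  | _ k ih =>
    by_cases hk : k < N + 2
    · exact (Finset.single_le_sum (fun j _ => hQ j) (Finset.mem_range.2 hk)).trans
        (le_max_left _ _)
    · obtain ⟨j, rfl⟩ : ∃ j, k = j + 2 := ⟨k - 2, by omega⟩
      obtain ⟨haj, hbj, hrecj⟩ := hN j (by omega)
      have h₁ := ih (j + 1) (by omega)
      have h₀ := ih j (by omega)
      nlinarith [hQ j, hQ (j + 1), le_max_right (∑ k ∈ Finset.range (N + 2), Q k) (2 * C)]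

theorem bddAbove_range_of_le_two_step_geometric {Q X : ℕ → ℝ} {A D γ : ℝ} (hγ₀ : 0 ≤ γ)
    (hγ₁ : γ < 1) (hQ : ∀ k, 0 ≤ Q k) (hX : ∀ k, 1 ≤ k → X k ≤ A * γ ^ k * Q k)
    (hQX : ∀ k, 1 ≤ k → Q (k + 2) ≤ 2 * X (k + 1) + X k + D) :
    BddAbove (range Q) := by
  have hvanish : ∀ c, Tendsto (fun k => c * γ ^ k) atTop (𝓝 0) := fun c => by
    simpa using (tendsto_pow_atTop_nhds_zero_of_lt_one hγ₀ hγ₁).const_mul c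
  refine bddAbove_range_of_le_two_step (C := D) hQ (hvanish (2 * A * γ)) (hvanish A) ?_
  filter_upwards [eventually_ge_atTop 1] with k hk
  have hX₁ := hX (k + 1) (by omega)
  rw [pow_succ] at hX₁
  linarith [hQX k hk, hX k hk]

theorem summable_natCast_mul_sqrt_of_le_geometric {ε : ℕ → ℝ} {C γ : ℝ} (hγ₀ : 0 ≤ γ)
    (hγ₁ : γ < 1) (hε : ∀ᶠ k in atTop, ε k ≤ C * γ ^ k) :
    Summable fun k : ℕ => (k : ℝ) * √(ε k) := by
  have hr : ‖√γ‖ < 1 := by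
    rw [Real.norm_of_nonneg (Real.sqrt_nonneg γ), Real.sqrt_lt' one_pos]
    simpa using hγ₁
  have hgeom : Summable fun k : ℕ => √C * ((k : ℝ) * √γ ^ k) := by
    simpa using (summable_pow_mul_geometric_of_norm_lt_one 1 hr).mul_left √C
  refine hgeom.of_norm_bounded_eventually_nat ?_
  filter_upwards [hε] with k hk
  rw [Real.norm_of_nonneg (by positivity), mul_left_comm]
  gcongr
  calc √(ε k) ≤ √(C * γ ^ k) := Real.sqrt_le_sqrt hk
    _ = √C * √γ ^ k := by
      have hγk : γ ^ k = (√γ ^ k) ^ 2 := by rw [← pow_mul, mul_comm, pow_mul, Real.sq_sqrt hγ₀]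
      rw [hγk, Real.sqrt_mul' _ (sq_nonneg _), Real.sqrt_sq (by positivity)]

theorem exists_consensus_error_le_geometric {E : Type*} [NormedAddCommGroup E]
    [InnerProductSpace ℝ E] {m : ℕ} (hm : 1 ≤ m) {α Gg Γ γ : ℝ} (hα : 0 < α) (hΓ : 0 ≤ Γ)
    (hγ₀ : 0 ≤ γ) (hγ₁ : γ < 1) {G : Fin m → E → E} (hG : ∀ i z, ‖G i z‖ ≤ Gg)
    {h : E → ℝ} (hh : ConvexOn ℝ univ h) {lam : ℕ → Fin m → Fin m → ℝ}
    (hrow : ∀ k, 1 ≤ k → ∀ i, ∑ j, lam k i j = 1)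
    (hcol : ∀ k, 1 ≤ k → ∀ j, ∑ i, lam k i j = 1)
    (hclose : ∀ k, 1 ≤ k → ∀ i j, |lam k i j - 1 / m| ≤ Γ * γ ^ k)
    {x y q qhat : ℕ → Fin m → E}
    (hq : ∀ k, 1 ≤ k → ∀ i, q k i = y (k - 1) i - α • G i (y (k - 1) i))
    (hqhat : ∀ k, 1 ≤ k → ∀ i, qhat k i = ∑ j, lam k i j • q k j)
    (hx : ∀ k, 1 ≤ k → ∀ i, IsProxPoint h (1 / (2 * α)) (qhat k i) (x k i))
    (hy : ∀ k, 1 ≤ k → ∀ i,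
      y k i = x k i + (((k : ℝ) - 1) / ((k : ℝ) + 2)) • (x k i - x (k - 1) i)) :
    ∃ M, ∀ k, 1 ≤ k → ∀ i, ‖qhat k i - (1 / (m : ℝ)) • ∑ j, qhat k j‖ ≤ M * γ ^ k := by
  set p : Fin m := ⟨0, hm⟩
  set Q : ℕ → ℝ := fun k => spreadAbout (q k) p
  have hmean : ∀ k, 1 ≤ k → ∀ i,
      ‖qhat k i - (1 / (m : ℝ)) • ∑ j, qhat k j‖ ≤ Γ * γ ^ k * Q k := by
    intro k hk i
    rw [show qhat k = fun i => ∑ l, lam k i l • q k l from funext (hqhat k hk)]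
    simpa using norm_sum_smul_sub_mean_le (hrow k hk) (hcol k hk) (by simpa using hclose k hk)
      (q k) i p
  have hx_spread : ∀ k, 1 ≤ k → spreadAbout (x k) p ≤ 2 * m * Γ * γ ^ k * Q k := by
    intro k hk
    calc spreadAbout (x k) p ≤ spreadAbout (qhat k) p := Finset.sum_le_sum fun j _ =>
          (hx k hk j).norm_sub_le (hx k hk p) hh (by positivity)
      _ ≤ m * (2 * (Γ * γ ^ k * Q k)) := by
          simpa using spreadAbout_le_of_forall_norm_sub_le (hmean k hk) p
      _ = 2 * m * Γ * γ ^ k * Q k := by ring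
  have hq_spread : ∀ k, 1 ≤ k → Q (k + 2) ≤
      2 * spreadAbout (x (k + 1)) p + spreadAbout (x k) p + m * (2 * α * Gg) := by
    intro k hk
    have hk' : (1 : ℝ) ≤ k := by exact_mod_cast hk
    calc Q (k + 2) ≤ spreadAbout (y (k + 1)) p + m * (2 * α * Gg) := by
          simp only [Q, show q (k + 2) = _ from funext (hq (k + 2) (by omega))]
          simpa using spreadAbout_sub_smul_le hα.le (fun i => hG i (y (k + 1) i)) (y (k + 1)) p
      _ ≤ 2 * spreadAbout (x (k + 1)) p + spreadAbout (x k) p + m * (2 * α * Gg) := by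
          rw [show y (k + 1) = _ from funext (hy (k + 1) (by omega))]
          gcongr
          push_cast
          exact spreadAbout_add_smul_sub_le (div_nonneg (by linarith) (by linarith))
            ((div_le_one (by linarith)).2 (by linarith)) _ _ p
  obtain ⟨M, hM⟩ := bddAbove_range_of_le_two_step_geometric hγ₀ hγ₁
    (fun k => spreadAbout_nonneg (q k) p) hx_spread hq_spread
  refine ⟨Γ * M, fun k hk i => (hmean k hk i).trans ?_⟩
  rw [mul_right_comm Γ M]
  gcongr
  exact hM ⟨k, rfl⟩

theorem weighted_prox_error_summable_general {d m : ℕ} (hm : 1 ≤ m)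
    (α Gg Gh Γ γ : ℝ)
    (hα : 0 < α) (hGh : 0 < Gh) (hΓ : 0 < Γ)
    (hγ0 : 0 < γ) (hγ1 : γ < 1)
    -- the differentiable local objectives and their gradients
    (g' : Fin m → EuclideanSpace ℝ (Fin d) → EuclideanSpace ℝ (Fin d))
    (hGgrad : ∀ i z, ‖g' i z‖ ≤ Gg)
    -- the common nondifferentiable objective, with bounded subgradients
    (h : EuclideanSpace ℝ (Fin d) → ℝ)
    (hhconv : ConvexOn ℝ Set.univ h)
    -- the consensus weight matrices
    (lam : ℕ → Fin m → Fin m → ℝ)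
    (hlam_row : ∀ k, 1 ≤ k → ∀ i, ∑ j, lam k i j = 1)
    (hlam_col : ∀ k, 1 ≤ k → ∀ j, ∑ i, lam k i j = 1)
    (hlam_close : ∀ k, 1 ≤ k → ∀ i j, |lam k i j - 1 / m| ≤ Γ * γ ^ k)
    -- the iterates
    (x y q qhat : ℕ → Fin m → EuclideanSpace ℝ (Fin d))
    (hq : ∀ k, 1 ≤ k → ∀ i, q k i = y (k - 1) i - α • g' i (y (k - 1) i))
    (hqhat : ∀ k, 1 ≤ k → ∀ i, qhat k i = ∑ j, lam k i j • q k j)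
    (hx : ∀ k, 1 ≤ k → ∀ i, ∀ z : EuclideanSpace ℝ (Fin d),
      h (x k i) + (1 / (2 * α)) * ‖x k i - qhat k i‖ ^ 2 ≤
        h z + (1 / (2 * α)) * ‖z - qhat k i‖ ^ 2)
    (hy : ∀ k, 1 ≤ k → ∀ i,
      y k i = x k i + (((k : ℝ) - 1) / ((k : ℝ) + 2)) • (x k i - x (k - 1) i))
    -- the proximal error of the inexact centralized formulation
    (ε : ℕ → ℝ)
    (hε : ∀ k, 1 ≤ k →
      ε k ≤ (2 * Gh / m) * ∑ i, ‖qhat k i - (1 / (m : ℝ)) • ∑ j, qhat k j‖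
        + (1 / (2 * α)) *
          ((1 / (m : ℝ)) * ∑ i, ‖qhat k i - (1 / (m : ℝ)) • ∑ j, qhat k j‖) ^ 2) :
    Summable (fun k : ℕ => (k : ℝ) * Real.sqrt (ε k)) := by
  obtain ⟨M, hM⟩ := exists_consensus_error_le_geometric hm hα hΓ.le hγ0.le hγ1 hGgrad hhconv
    hlam_row hlam_col hlam_close hq hqhat hx hy
  refine summable_natCast_mul_sqrt_of_le_geometric (C := 2 * Gh * M + 1 / (2 * α) * M ^ 2)
    hγ0.le hγ1 ?_
  filter_upwards [eventually_ge_atTop 1] with k hk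
  have hsM : (1 / (m : ℝ)) * ∑ i, ‖qhat k i - (1 / (m : ℝ)) • ∑ j, qhat k j‖ ≤ M * γ ^ k := by
    rw [one_div_mul_eq_div, div_le_iff₀ (by positivity)]
    simpa [mul_comm] using Finset.sum_le_sum fun i (_ : i ∈ Finset.univ) => hM k hk i
  have hsplit : (2 * Gh / m) * ∑ i, ‖qhat k i - (1 / (m : ℝ)) • ∑ j, qhat k j‖ =
      2 * Gh * ((1 / (m : ℝ)) * ∑ i, ‖qhat k i - (1 / (m : ℝ)) • ∑ j, qhat k j‖) := by ring
  set s := (1 / (m : ℝ)) * ∑ i, ‖qhat k i - (1 / (m : ℝ)) • ∑ j, qhat k j‖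
  have hs₀ : 0 ≤ s := by positivity
  have hsq : s ^ 2 ≤ M ^ 2 * γ ^ k := calc
    s ^ 2 ≤ (M * γ ^ k) ^ 2 := pow_le_pow_left₀ hs₀ hsM 2
    _ = M ^ 2 * γ ^ k * γ ^ k := by ring
    _ ≤ M ^ 2 * γ ^ k * 1 := by gcongr; exact pow_le_one₀ hγ0.le hγ1.le
    _ = M ^ 2 * γ ^ k := mul_one _
  calc ε k ≤ 2 * Gh * s + 1 / (2 * α) * s ^ 2 := hsplit ▸ hε k hk
    _ ≤ 2 * Gh * (M * γ ^ k) + 1 / (2 * α) * (M ^ 2 * γ ^ k) := by gcongr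
    _ = (2 * Gh * M + 1 / (2 * α) * M ^ 2) * γ ^ k := by ring

/-- Summability of the weighted proximal-error sequence. -/
theorem weighted_prox_error_summable {d m : ℕ} (hm : 1 ≤ m)
    (α L Gg Gh Γ γ : ℝ)
    (hα : 0 < α) (hL : 0 < L) (hGg : 0 < Gg) (hGh : 0 < Gh) (hΓ : 0 < Γ)
    (hγ0 : 0 < γ) (hγ1 : γ < 1)
    -- the differentiable local objectives and their gradients
    (g : Fin m → EuclideanSpace ℝ (Fin d) → ℝ)
    (g' : Fin m → EuclideanSpace ℝ (Fin d) → EuclideanSpace ℝ (Fin d))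
    (hgconv : ∀ i, ConvexOn ℝ Set.univ (g i))
    (hgrad : ∀ i z, HasGradientAt (g i) (g' i z) z)
    (hLip : ∀ i z w, ‖g' i z - g' i w‖ ≤ L * ‖z - w‖)
    (hGgrad : ∀ i z, ‖g' i z‖ ≤ Gg)
    -- the common nondifferentiable objective, with bounded subgradients
    (h : EuclideanSpace ℝ (Fin d) → ℝ)
    (hhconv : ConvexOn ℝ Set.univ h)
    (hsub : ∀ x z : EuclideanSpace ℝ (Fin d),
      (∀ u, h x + ⟪z, u - x⟫ ≤ h u) → ‖z‖ ≤ Gh)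
    -- the consensus weight matrices
    (lam : ℕ → Fin m → Fin m → ℝ)
    (hlam_nonneg : ∀ k, 1 ≤ k → ∀ i j, 0 ≤ lam k i j)
    (hlam_row : ∀ k, 1 ≤ k → ∀ i, ∑ j, lam k i j = 1)
    (hlam_col : ∀ k, 1 ≤ k → ∀ j, ∑ i, lam k i j = 1)
    (hlam_close : ∀ k, 1 ≤ k → ∀ i j, |lam k i j - 1 / m| ≤ Γ * γ ^ k)
    -- the iterates
    (x y q qhat : ℕ → Fin m → EuclideanSpace ℝ (Fin d))
    (hq : ∀ k, 1 ≤ k → ∀ i, q k i = y (k - 1) i - α • g' i (y (k - 1) i))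
    (hqhat : ∀ k, 1 ≤ k → ∀ i, qhat k i = ∑ j, lam k i j • q k j)
    (hx : ∀ k, 1 ≤ k → ∀ i, ∀ z : EuclideanSpace ℝ (Fin d),
      h (x k i) + (1 / (2 * α)) * ‖x k i - qhat k i‖ ^ 2 ≤
        h z + (1 / (2 * α)) * ‖z - qhat k i‖ ^ 2)
    (hy : ∀ k, 1 ≤ k → ∀ i,
      y k i = x k i + (((k : ℝ) - 1) / ((k : ℝ) + 2)) • (x k i - x (k - 1) i))
    -- the proximal error of the inexact centralized formulation
    (ε : ℕ → ℝ) (hε_nonneg : ∀ k, 1 ≤ k → 0 ≤ ε k)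
    (hε : ∀ k, 1 ≤ k →
      ε k ≤ (2 * Gh / m) * ∑ i, ‖qhat k i - (1 / (m : ℝ)) • ∑ j, qhat k j‖
        + (1 / (2 * α)) *
          ((1 / (m : ℝ)) * ∑ i, ‖qhat k i - (1 / (m : ℝ)) • ∑ j, qhat k j‖) ^ 2) :
    Summable (fun k : ℕ => (k : ℝ) * Real.sqrt (ε k)) :=
  weighted_prox_error_summable_general hm α Gg Gh Γ γ hα hGh hΓ hγ0 hγ1 g' hGgrad h hhconv lam
    hlam_row hlam_col hlam_close x y q qhat hq hqhat hx hy ε hε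
end
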